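/- arXiv:2501.02609 — 10 statements merged into one kernel-verified Lean document; each statement's English description precedes it below -/
import Mathlib

section
/- Theorem 1, (1)⇔(2): A dataset {p^N}_{N∈𝒩} is consistent with the general linear-in-means model (GLM) if and only if for every agent i ∈ 𝒜 the collection of sets {co⁻¹(Δ(p^N), p_i^N)}_{N∈𝒩_i} has a point of mutual intersection, i.e. ⋂_{N∈𝒩_i} co⁻¹(Δ(p^N), p_i^N) ≠ ∅. -/
open Finset
open scoped Classical

noncomputable section

/-- The simplex Δ(X) of probability vectors on a finite set X. -/
def simplex (X : Type*) [Fintype X] : Set (X → ℝ) :=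
  {v | (∀ x, 0 ≤ v x) ∧ (∑ x, v x) = 1}

/-- The inverse cone co⁻¹(Δ(p^N), p_i^N). -/
def invCone {X A : Type*} [Fintype X] [DecidableEq A]
    (p : Finset A → A → X → ℝ) (N : Finset A) (i : A) : Set (X → ℝ) :=
  {v | v ∈ simplex X ∧ ∃ γ : A → ℝ, (∀ j ∈ N.erase i, γ j ≤ 0) ∧
    (∑ j ∈ N, γ j) = 1 ∧ v = ∑ j ∈ N, γ j • p N j}

/-- Consistency with the general linear-in-means model (GLM). -/
def GLMConsistent {X A : Type*} [Fintype X] [DecidableEq A]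
    (𝒩 : Finset (Finset A)) (p : Finset A → A → X → ℝ) : Prop :=
  ∃ v : A → X → ℝ, (∀ i, v i ∈ simplex X) ∧
    ∀ N ∈ 𝒩, ∀ i ∈ N, ∃ π : A → ℝ,
      (∀ j ∈ N, 0 ≤ π j) ∧ 0 < π i ∧ (∑ j ∈ N, π j) = 1 ∧
      p N i = π i • v i + ∑ j ∈ N.erase i, π j • p N j

/-!
Solving the GLM equation `p_i = π_i v_i + ∑_{j ≠ i} π_j p_j` for `v_i` expresses `v_i` as the
affine combination of the `p_j` with weights `1/π_i` at `i` and `-π_j/π_i` elsewhere, and this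
pivoting of the weights at `i` is an involution. It exchanges nonnegative weights with positive
pivot weight (the GLM peer effects) and weights that are nonpositive off `i` (the coefficients
`γ` of the inverse cone), so `v_i` is a feasible GLM type for agent `i` in group `N` exactly when
it lies in `co⁻¹(Δ(p^N), p_i^N)`. Agents are decoupled, so a consistent profile exists iff each
agent's inverse cones share a point; an agent in no group takes any point of the simplex.
-/

section Pivot

variable {A : Type*} [DecidableEq A]

def pivotWeights (γ : A → ℝ) (i : A) : A → ℝ :=
  fun j => if j = i then (γ i)⁻¹ else -(γ j / γ i)

variable {γ : A → ℝ} {i : A}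

@[simp]
lemma pivotWeights_self : pivotWeights γ i i = (γ i)⁻¹ := if_pos rfl

lemma pivotWeights_of_ne {j : A} (hj : j ≠ i) : pivotWeights γ i j = -(γ j / γ i) := if_neg hj

lemma pivotWeights_self_pos (hγ : 0 < γ i) : 0 < pivotWeights γ i i := by
  simpa using hγ

lemma pivotWeights_nonpos {j : A} (hγ : 0 < γ i) (hj : j ≠ i) (hγj : 0 ≤ γ j) :
    pivotWeights γ i j ≤ 0 := by
  rw [pivotWeights_of_ne hj, neg_nonpos]
  positivity

lemma pivotWeights_nonneg {j : A} (hγ : 0 < γ i) (hj : j ≠ i) (hγj : γ j ≤ 0) :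
    0 ≤ pivotWeights γ i j := by
  rw [pivotWeights_of_ne hj, neg_nonneg]
  exact div_nonpos_of_nonpos_of_nonneg hγj hγ.le

lemma sum_pivotWeights {N : Finset A} (hi : i ∈ N) (hγ : γ i ≠ 0) (hsum : ∑ j ∈ N, γ j = 1) :
    ∑ j ∈ N, pivotWeights γ i j = 1 := by
  rw [← add_sum_erase _ _ hi] at hsum ⊢
  rw [pivotWeights_self, sum_congr rfl fun j hj => pivotWeights_of_ne (ne_of_mem_erase hj),
    sum_neg_distrib, ← sum_div, eq_sub_of_add_eq' hsum]
  field_simp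
  ring

lemma eq_pivotWeights_smul_add_sum {E : Type*} [AddCommGroup E] [Module ℝ E]
    {s : Finset A} (hi : i ∉ s) (hγ : γ i ≠ 0) {q : A → E} {u w : E}
    (h : w = γ i • u + ∑ j ∈ s, γ j • q j) :
    u = pivotWeights γ i i • w + ∑ j ∈ s, pivotWeights γ i j • q j := by
  have hs : ∀ j ∈ s, pivotWeights γ i j = -(γ j / γ i) :=
    fun j hj => pivotWeights_of_ne (ne_of_mem_of_not_mem hj hi)
  rw [sum_congr rfl fun j hj => by rw [hs j hj], h, pivotWeights_self, smul_add, smul_smul,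
    inv_mul_cancel₀ hγ, one_smul, smul_sum, add_assoc, ← sum_add_distrib, sum_eq_zero, add_zero]
  intro j _
  rw [smul_smul, ← add_smul, inv_mul_eq_div, add_neg_cancel, zero_smul]

end Pivot

lemma pos_of_sum_eq_one_of_nonpos {A : Type*} [DecidableEq A] {N : Finset A} {i : A}
    {γ : A → ℝ} (hi : i ∈ N) (hsum : ∑ j ∈ N, γ j = 1) (hγ : ∀ j ∈ N.erase i, γ j ≤ 0) :
    0 < γ i := by
  rw [← add_sum_erase _ _ hi] at hsum
  linarith [sum_nonpos hγ]

lemma exists_glm_weights_iff_mem_invCone {X A : Type*} [Fintype X] [DecidableEq A]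
    {p : Finset A → A → X → ℝ} {N : Finset A} {i : A} (hi : i ∈ N) {v : X → ℝ}
    (hv : v ∈ simplex X) :
    (∃ π : A → ℝ, (∀ j ∈ N, 0 ≤ π j) ∧ 0 < π i ∧ (∑ j ∈ N, π j) = 1 ∧
      p N i = π i • v + ∑ j ∈ N.erase i, π j • p N j) ↔ v ∈ invCone p N i := by
  constructor
  · rintro ⟨π, hπ, hπi, hsum, heq⟩
    refine ⟨hv, pivotWeights π i, fun j hj => ?_, sum_pivotWeights hi hπi.ne' hsum, ?_⟩
    · exact pivotWeights_nonpos hπi (ne_of_mem_erase hj) (hπ j (mem_of_mem_erase hj))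
    · rw [← add_sum_erase _ _ hi]
      exact eq_pivotWeights_smul_add_sum (notMem_erase i N) hπi.ne' heq
  · rintro ⟨-, γ, hγ, hsum, heq⟩
    have hγi := pos_of_sum_eq_one_of_nonpos hi hsum hγ
    refine ⟨pivotWeights γ i, fun j hj => ?_, pivotWeights_self_pos hγi,
      sum_pivotWeights hi hγi.ne' hsum, ?_⟩
    · by_cases hji : j = i
      · exact hji ▸ (pivotWeights_self_pos hγi).le
      · exact pivotWeights_nonneg hγi hji (hγ j (mem_erase.mpr ⟨hji, hj⟩))
    · rw [← add_sum_erase _ _ hi] at heq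
      exact eq_pivotWeights_smul_add_sum (notMem_erase i N) hγi.ne' heq

lemma glmConsistent_iff_forall_exists {X A : Type*} [Fintype X] [DecidableEq A]
    (𝒩 : Finset (Finset A)) (p : Finset A → A → X → ℝ) :
    GLMConsistent 𝒩 p ↔
      ∀ i : A, ∃ v ∈ simplex X, ∀ N ∈ 𝒩.filter (fun N => i ∈ N), v ∈ invCone p N i := by
  simp only [GLMConsistent, mem_filter, and_imp]
  constructor
  · rintro ⟨v, hv, hglm⟩ i
    exact ⟨v i, hv i, fun N hN hi =>
      (exists_glm_weights_iff_mem_invCone hi (hv i)).mp (hglm N hN i hi)⟩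
  · intro h
    choose v hv hcone using h
    exact ⟨v, hv, fun N hN i hi =>
      (exists_glm_weights_iff_mem_invCone hi (hv i)).mpr (hcone i N hN hi)⟩

lemma exists_mem_simplex_iff_biInter_invCone_nonempty {X A : Type*} [Fintype X] [Nonempty X]
    [DecidableEq A] (p : Finset A → A → X → ℝ) (s : Finset (Finset A)) (i : A) :
    (∃ v ∈ simplex X, ∀ N ∈ s, v ∈ invCone p N i) ↔ (⋂ N ∈ s, invCone p N i).Nonempty := by
  constructor
  · rintro ⟨v, -, hv⟩
    exact ⟨v, Set.mem_iInter₂.mpr hv⟩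
  · rintro ⟨v, hv⟩
    rw [Set.mem_iInter₂] at hv
    obtain rfl | ⟨N, hN⟩ := s.eq_empty_or_nonempty
    · exact ⟨Pi.single (Classical.arbitrary X) 1, single_mem_stdSimplex ℝ _, by simp⟩
    · exact ⟨v, (hv N hN).1, hv⟩

theorem glm_iff_intersection_general {X A : Type*} [Fintype X] [DecidableEq A]
    (hX : 2 ≤ Fintype.card X)
    (𝒩 : Finset (Finset A))
    (p : Finset A → A → X → ℝ) :
    GLMConsistent 𝒩 p ↔
      ∀ i : A, (⋂ N ∈ 𝒩.filter (fun N => i ∈ N), invCone p N i).Nonempty := by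
  have : Nonempty X := Fintype.card_pos_iff.mp (by omega)
  rw [glmConsistent_iff_forall_exists]
  exact forall_congr' fun i => exists_mem_simplex_iff_biInter_invCone_nonempty p _ i

/-- Theorem 1, (1) ⇔ (2): consistency with GLM is equivalent to each agent's inverse
cones having a point of mutual intersection. -/
theorem glm_iff_intersection {X A : Type*} [Fintype X] [Fintype A] [DecidableEq A]
    (hX : 2 ≤ Fintype.card X) (hA : 2 ≤ Fintype.card A)
    (𝒩 : Finset (Finset A)) (h𝒩 : 𝒩.Nonempty) (h𝒩' : ∀ N ∈ 𝒩, N.Nonempty)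
    (p : Finset A → A → X → ℝ) (hp : ∀ N ∈ 𝒩, ∀ i ∈ N, p N i ∈ simplex X) :
    GLMConsistent 𝒩 p ↔
      ∀ i : A, (⋂ N ∈ 𝒩.filter (fun N => i ∈ N), invCone p N i).Nonempty :=
  glm_iff_intersection_general hX 𝒩 p
end
end

section
/- Corollary 1 (one-dimensional characterization): Suppose |X| = 2 and write p_i^N for the scalar probability that agent i assigns to the first alternative in group N. Then the dataset {p^N}_{N∈𝒩} is consistent with the general linear-in-means model if and only if for every agent i ∈ 𝒜: (1) if 𝒩_i^- and 𝒩_i^+ are both nonempty then min_{N∈𝒩_i^-} p_i^N ≥ max_{N∈𝒩_i^+} p_i^N; (2) the set {p_i^N : N ∈ 𝒩_i^- ∩ 𝒩_i^+} contains at most one value, denoted p_i^=; and (3) if 𝒩_i^- ∩ 𝒩_i^+ is nonempty then min_{N∈𝒩_i^-} p_i^N = p_i^= = max_{N∈𝒩_i^+} p_i^N. -/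
open Finset
open scoped Classical

noncomputable section

/-- 𝒩_i^-: the groups containing i where agent i's probability of the first alternative is
weakly smaller than everyone else's. -/
def Nminus {A : Type*} [DecidableEq A]
    (𝒩 : Finset (Finset A)) (p : Finset A → A → Fin 2 → ℝ) (i : A) : Finset (Finset A) :=
  𝒩.filter (fun N => i ∈ N ∧ ∀ j ∈ N.erase i, p N i 0 ≤ p N j 0)

/-- 𝒩_i^+: the groups containing i where agent i's probability of the first alternative is
weakly larger than everyone else's. -/
def Nplus {A : Type*} [DecidableEq A]
    (𝒩 : Finset (Finset A)) (p : Finset A → A → Fin 2 → ℝ) (i : A) : Finset (Finset A) :=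
  𝒩.filter (fun N => i ∈ N ∧ ∀ j ∈ N.erase i, p N j 0 ≤ p N i 0)

/-- helper: a vector equation on `Fin 2` follows from the first coordinate when all
vectors sum to 1 and weights sum to 1. -/
lemma glm_vec_eq (v q t : Fin 2 → ℝ) (ε : ℝ) (hv : v 0 + v 1 = 1) (hq : q 0 + q 1 = 1)
    (ht : t 0 + t 1 = 1) (h0 : t 0 = ε * v 0 + (1 - ε) * q 0) :
    t = ε • v + (1 - ε) • q := by
  funext x
  fin_cases x
  · simpa using h0
  · have : t 1 = ε * v 1 + (1 - ε) * q 1 := by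
      linear_combination ht - h0 - ε * hv - (1 - ε) * hq
    simpa using this

/-- Corollary 1: one-dimensional (|X| = 2) characterization of GLM. -/
theorem glm_one_dimensional_characterization
    {A : Type*} [Fintype A] [DecidableEq A] (hA : 2 ≤ Fintype.card A)
    (𝒩 : Finset (Finset A)) (h𝒩 : 𝒩.Nonempty) (h𝒩' : ∀ N ∈ 𝒩, N.Nonempty)
    (p : Finset A → A → Fin 2 → ℝ) (hp : ∀ N ∈ 𝒩, ∀ i ∈ N, p N i ∈ simplex (Fin 2)) :
    GLMConsistent 𝒩 p ↔
      ∀ i : A,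
        (∀ (h1 : (Nminus 𝒩 p i).Nonempty) (h2 : (Nplus 𝒩 p i).Nonempty),
          ((Nplus 𝒩 p i).image (fun N => p N i 0)).max' (h2.image _) ≤
            ((Nminus 𝒩 p i).image (fun N => p N i 0)).min' (h1.image _)) ∧
        (((Nminus 𝒩 p i ∩ Nplus 𝒩 p i).image (fun N => p N i 0)).card ≤ 1) ∧
        (∀ N, ∀ hN : N ∈ Nminus 𝒩 p i ∩ Nplus 𝒩 p i,
          ((Nminus 𝒩 p i).image (fun M => p M i 0)).min'
              (Finset.Nonempty.image ⟨N, (Finset.mem_inter.mp hN).1⟩ _) = p N i 0 ∧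
          p N i 0 = ((Nplus 𝒩 p i).image (fun M => p M i 0)).max'
              (Finset.Nonempty.image ⟨N, (Finset.mem_inter.mp hN).2⟩ _)) := by
  -- basic facts about the data
  have psum : ∀ N ∈ 𝒩, ∀ i ∈ N, p N i 0 + p N i 1 = 1 := by
    intro N hN i hi
    have h := (hp N hN i hi).2
    rwa [Fin.sum_univ_two] at h
  have p01 : ∀ N ∈ 𝒩, ∀ i ∈ N, 0 ≤ p N i 0 ∧ p N i 0 ≤ 1 := by
    intro N hN i hi
    have h0 := (hp N hN i hi).1 0
    have h1 := (hp N hN i hi).1 1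
    have hs := psum N hN i hi
    exact ⟨h0, by linarith⟩
  have memMinus : ∀ {i N}, N ∈ Nminus 𝒩 p i →
      N ∈ 𝒩 ∧ i ∈ N ∧ ∀ j ∈ N.erase i, p N i 0 ≤ p N j 0 := by
    intro i N hN
    simp only [Nminus, Finset.mem_filter] at hN
    exact ⟨hN.1, hN.2.1, hN.2.2⟩
  have memPlus : ∀ {i N}, N ∈ Nplus 𝒩 p i →
      N ∈ 𝒩 ∧ i ∈ N ∧ ∀ j ∈ N.erase i, p N j 0 ≤ p N i 0 := by
    intro i N hN
    simp only [Nplus, Finset.mem_filter] at hN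
    exact ⟨hN.1, hN.2.1, hN.2.2⟩
  constructor
  · -- GLM ⟹ conditions
    rintro ⟨v, hv, hglm⟩ i
    -- key inequalities: v i 0 ≤ p N i 0 on Nminus, ≥ on Nplus
    have keyMinus : ∀ N ∈ Nminus 𝒩 p i, v i 0 ≤ p N i 0 := by
      intro N hN
      obtain ⟨hN𝒩, hiN, hcmp⟩ := memMinus hN
      obtain ⟨π, hπ0, hπi, hπs, heq⟩ := hglm N hN𝒩 i hiN
      have heq0 : p N i 0 = π i * v i 0 + ∑ j ∈ N.erase i, π j * p N j 0 := by
        have := congrFun heq 0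
        simpa using this
      have hsum : ∑ j ∈ N.erase i, π j * p N j 0 ≥ (1 - π i) * p N i 0 := by
        have h1 : ∑ j ∈ N.erase i, π j * p N i 0 ≤ ∑ j ∈ N.erase i, π j * p N j 0 := by
          apply Finset.sum_le_sum
          intro j hj
          exact mul_le_mul_of_nonneg_left (hcmp j hj) (hπ0 j (Finset.mem_of_mem_erase hj))
        have h2 : ∑ j ∈ N.erase i, π j * p N i 0 = (1 - π i) * p N i 0 := by
          rw [← Finset.sum_mul]
          congr 1
          have := Finset.add_sum_erase N π hiN
          linarith
        linarith
      nlinarith [hπi]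
    have keyPlus : ∀ N ∈ Nplus 𝒩 p i, p N i 0 ≤ v i 0 := by
      intro N hN
      obtain ⟨hN𝒩, hiN, hcmp⟩ := memPlus hN
      obtain ⟨π, hπ0, hπi, hπs, heq⟩ := hglm N hN𝒩 i hiN
      have heq0 : p N i 0 = π i * v i 0 + ∑ j ∈ N.erase i, π j * p N j 0 := by
        have := congrFun heq 0
        simpa using this
      have hsum : ∑ j ∈ N.erase i, π j * p N j 0 ≤ (1 - π i) * p N i 0 := by
        have h1 : ∑ j ∈ N.erase i, π j * p N j 0 ≤ ∑ j ∈ N.erase i, π j * p N i 0 := by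
          apply Finset.sum_le_sum
          intro j hj
          exact mul_le_mul_of_nonneg_left (hcmp j hj) (hπ0 j (Finset.mem_of_mem_erase hj))
        have h2 : ∑ j ∈ N.erase i, π j * p N i 0 = (1 - π i) * p N i 0 := by
          rw [← Finset.sum_mul]
          congr 1
          have := Finset.add_sum_erase N π hiN
          linarith
        linarith
      nlinarith [hπi]
    have cond1 : ∀ (h1 : (Nminus 𝒩 p i).Nonempty) (h2 : (Nplus 𝒩 p i).Nonempty),
        ((Nplus 𝒩 p i).image (fun N => p N i 0)).max' (h2.image _) ≤
          ((Nminus 𝒩 p i).image (fun N => p N i 0)).min' (h1.image _) := by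
      intro h1 h2
      apply le_trans (b := v i 0)
      · apply Finset.max'_le
        intro y hy
        obtain ⟨N, hN, rfl⟩ := Finset.mem_image.mp hy
        exact keyPlus N hN
      · apply Finset.le_min'
        intro y hy
        obtain ⟨N, hN, rfl⟩ := Finset.mem_image.mp hy
        exact keyMinus N hN
    -- for any N in the intersection, min' = p N i 0 = max'
    have cond3 : ∀ N, ∀ hN : N ∈ Nminus 𝒩 p i ∩ Nplus 𝒩 p i,
        ((Nminus 𝒩 p i).image (fun M => p M i 0)).min'
            (Finset.Nonempty.image ⟨N, (Finset.mem_inter.mp hN).1⟩ _) = p N i 0 ∧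
        p N i 0 = ((Nplus 𝒩 p i).image (fun M => p M i 0)).max'
            (Finset.Nonempty.image ⟨N, (Finset.mem_inter.mp hN).2⟩ _) := by
      intro N hN
      have hNm := (Finset.mem_inter.mp hN).1
      have hNp := (Finset.mem_inter.mp hN).2
      have h1 : (Nminus 𝒩 p i).Nonempty := ⟨N, hNm⟩
      have h2 : (Nplus 𝒩 p i).Nonempty := ⟨N, hNp⟩
      have hminle : ((Nminus 𝒩 p i).image (fun M => p M i 0)).min' (h1.image _) ≤ p N i 0 :=
        Finset.min'_le _ _ (Finset.mem_image_of_mem _ hNm)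
      have hlemax : p N i 0 ≤ ((Nplus 𝒩 p i).image (fun M => p M i 0)).max' (h2.image _) := by
        apply Finset.le_max'
        exact Finset.mem_image_of_mem _ hNp
      have hmm := cond1 h1 h2
      constructor
      · linarith
      · linarith
    refine ⟨cond1, ?_, cond3⟩
    -- card ≤ 1
    apply Finset.card_le_one.mpr
    intro a ha b hb
    obtain ⟨N, hN, rfl⟩ := Finset.mem_image.mp ha
    obtain ⟨M, hM, rfl⟩ := Finset.mem_image.mp hb
    have hNa := (cond3 N hN).1
    have hMa := (cond3 M hM).1
    rw [← hNa, ← hMa]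
  · -- conditions ⟹ GLM
    intro hcond
    -- define the candidate value c i
    set c : A → ℝ := fun i =>
      if h : (Nminus 𝒩 p i).Nonempty then
        ((Nminus 𝒩 p i).image (fun N => p N i 0)).min' (h.image _)
      else 1 with hc
    have hc_le : ∀ i N, N ∈ Nminus 𝒩 p i → c i ≤ p N i 0 := by
      intro i N hN
      have hne : (Nminus 𝒩 p i).Nonempty := ⟨N, hN⟩
      rw [hc]
      simp only [dif_pos hne]
      exact Finset.min'_le _ _ (Finset.mem_image_of_mem _ hN)
    have hc_ge : ∀ i N, N ∈ Nplus 𝒩 p i → p N i 0 ≤ c i := by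
      intro i N hN
      obtain ⟨hN𝒩, hiN, -⟩ := memPlus hN
      have h2 : (Nplus 𝒩 p i).Nonempty := ⟨N, hN⟩
      rw [hc]
      by_cases hne : (Nminus 𝒩 p i).Nonempty
      · simp only [dif_pos hne]
        have hle : p N i 0 ≤ ((Nplus 𝒩 p i).image (fun N => p N i 0)).max' (h2.image _) := by
          apply Finset.le_max'
          exact Finset.mem_image_of_mem _ hN
        have := (hcond i).1 hne h2
        linarith
      · simp only [dif_neg hne]
        exact (p01 N hN𝒩 i hiN).2
    have hc01 : ∀ i, 0 ≤ c i ∧ c i ≤ 1 := by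
      intro i
      rw [hc]
      by_cases hne : (Nminus 𝒩 p i).Nonempty
      · simp only [dif_pos hne]
        have hmem := Finset.min'_mem ((Nminus 𝒩 p i).image (fun N => p N i 0)) (hne.image _)
        obtain ⟨N, hN, hEq⟩ := Finset.mem_image.mp hmem
        obtain ⟨hN𝒩, hiN, -⟩ := memMinus hN
        rw [← hEq]
        exact p01 N hN𝒩 i hiN
      · simp only [dif_neg hne]
        norm_num
    -- candidate v
    refine ⟨fun i x => if x = 0 then c i else 1 - c i, ?_, ?_⟩
    · intro i
      constructor
      · intro x
        fin_cases x
        · simpa using (hc01 i).1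
        · simpa using (hc01 i).2
      · rw [Fin.sum_univ_two]
        norm_num
    · intro N hN i hi
      have hvsum : (fun x => if x = (0 : Fin 2) then c i else 1 - c i) 0 +
          (fun x => if x = (0 : Fin 2) then c i else 1 - c i) 1 = 1 := by norm_num
      rcases lt_trichotomy (c i) (p N i 0) with hlt | heq | hgt
      · -- c i < p N i 0 : then N ∉ Nplus, so some j has p N j 0 > p N i 0
        have hnp : N ∉ Nplus 𝒩 p i := fun h => absurd (hc_ge i N h) (by linarith)
        have : ¬ (i ∈ N ∧ ∀ j ∈ N.erase i, p N j 0 ≤ p N i 0) := by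
          intro h
          apply hnp
          simp only [Nplus, Finset.mem_filter]
          exact ⟨hN, h⟩
        push_neg at this
        obtain ⟨j, hj, hjt⟩ := this hi
        have hjN : j ∈ N := Finset.mem_of_mem_erase hj
        have hji : j ≠ i := (Finset.mem_erase.mp hj).1
        set M := p N j 0 with hM
        set ε : ℝ := (M - p N i 0) / (M - c i) with hε
        have hMc : 0 < M - c i := by linarith
        have hε0 : 0 < ε := div_pos (by linarith) hMc
        have hε1 : ε < 1 := (div_lt_one hMc).mpr (by linarith)
        refine ⟨fun k => if k = i then ε else if k = j then 1 - ε else 0, ?_, ?_, ?_, ?_⟩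
        · intro k _
          by_cases h1 : k = i
          · simp [h1]; linarith
          · by_cases h2 : k = j
            · simp [h1, h2, hji]; linarith
            · simp [h1, h2]
        · simp; linarith
        · rw [← Finset.add_sum_erase N _ hi, ← Finset.add_sum_erase (N.erase i) _ hj]
          have hz : ∑ k ∈ (N.erase i).erase j,
              (if k = i then ε else if k = j then 1 - ε else 0) = 0 := by
            apply Finset.sum_eq_zero
            intro k hk
            have hkj : k ≠ j := (Finset.mem_erase.mp hk).1
            have hki : k ≠ i := (Finset.mem_erase.mp (Finset.mem_of_mem_erase hk)).1
            simp [hki, hkj]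
          rw [hz, add_zero]
          have e1 : (if i = i then ε else if i = j then 1 - ε else 0) = ε := if_pos rfl
          have e2 : (if j = i then ε else if j = j then 1 - ε else 0) = 1 - ε := by
            rw [if_neg hji, if_pos rfl]
          rw [e1, e2]; ring
        · have hsum := Finset.sum_eq_single_of_mem
            (f := fun k => (if k = i then ε else if k = j then 1 - ε else 0) • p N k) j hj
            (by intro k hk hkj
                have hki : k ≠ i := (Finset.mem_erase.mp hk).1
                simp [hki, hkj])
          simp only at hsum
          rw [hsum]
          have e1 : (if i = i then ε else if i = j then 1 - ε else 0) = ε := if_pos rfl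
          have e2 : (if j = i then ε else if j = j then 1 - ε else 0) = 1 - ε := by
            rw [if_neg hji, if_pos rfl]
          simp only [hji, ite_true, ite_false, eq_self_iff_true, if_true, if_false]
          apply glm_vec_eq _ _ _ _ hvsum (psum N hN j hjN) (psum N hN i hi)
          have e0 : (if (0 : Fin 2) = 0 then c i else 1 - c i) = c i := if_pos rfl
          rw [e0, hε]
          field_simp [hMc.ne']
          ring
      · -- c i = p N i 0 : put all weight on i
        refine ⟨fun k => if k = i then 1 else 0, ?_, ?_, ?_, ?_⟩
        · intro k _
          by_cases h1 : k = i <;> simp [h1]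
        · simp
        · rw [← Finset.add_sum_erase N _ hi]
          have hz : ∑ k ∈ N.erase i, (if k = i then (1:ℝ) else 0) = 0 := by
            apply Finset.sum_eq_zero
            intro k hk
            simp [(Finset.mem_erase.mp hk).1]
          rw [hz]
          simp
        · have hsum : ∑ k ∈ N.erase i,
              (if k = i then (1:ℝ) else 0) • p N k = 0 := by
            apply Finset.sum_eq_zero
            intro k hk
            simp [(Finset.mem_erase.mp hk).1]
          rw [hsum, add_zero]
          simp only [eq_self_iff_true, if_true, ite_true, one_smul]
          funext x
          fin_cases x
          · simpa using heq.symm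
          · show p N i 1 = 1 - c i
            have hth := psum N hN i hi
            linarith
      · -- c i > p N i 0 : then N ∉ Nminus, so some j has p N j 0 < p N i 0
        have hnm : N ∉ Nminus 𝒩 p i := fun h => absurd (hc_le i N h) (by linarith)
        have : ¬ (i ∈ N ∧ ∀ j ∈ N.erase i, p N i 0 ≤ p N j 0) := by
          intro h
          apply hnm
          simp only [Nminus, Finset.mem_filter]
          exact ⟨hN, h⟩
        push_neg at this
        obtain ⟨j, hj, hjt⟩ := this hi
        have hjN : j ∈ N := Finset.mem_of_mem_erase hj
        have hji : j ≠ i := (Finset.mem_erase.mp hj).1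
        set m := p N j 0 with hm
        set ε : ℝ := (p N i 0 - m) / (c i - m) with hε
        have hMc : 0 < c i - m := by linarith
        have hε0 : 0 < ε := div_pos (by linarith) hMc
        have hε1 : ε < 1 := (div_lt_one hMc).mpr (by linarith)
        refine ⟨fun k => if k = i then ε else if k = j then 1 - ε else 0, ?_, ?_, ?_, ?_⟩
        · intro k _
          by_cases h1 : k = i
          · simp [h1]; linarith
          · by_cases h2 : k = j
            · simp [h1, h2, hji]; linarith
            · simp [h1, h2]
        · simp; linarith
        · rw [← Finset.add_sum_erase N _ hi, ← Finset.add_sum_erase (N.erase i) _ hj]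
          have hz : ∑ k ∈ (N.erase i).erase j,
              (if k = i then ε else if k = j then 1 - ε else 0) = 0 := by
            apply Finset.sum_eq_zero
            intro k hk
            have hkj : k ≠ j := (Finset.mem_erase.mp hk).1
            have hki : k ≠ i := (Finset.mem_erase.mp (Finset.mem_of_mem_erase hk)).1
            simp [hki, hkj]
          rw [hz, add_zero]
          have e1 : (if i = i then ε else if i = j then 1 - ε else 0) = ε := if_pos rfl
          have e2 : (if j = i then ε else if j = j then 1 - ε else 0) = 1 - ε := by
            rw [if_neg hji, if_pos rfl]
          rw [e1, e2]; ring
        · have hsum := Finset.sum_eq_single_of_mem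
            (f := fun k => (if k = i then ε else if k = j then 1 - ε else 0) • p N k) j hj
            (by intro k hk hkj
                have hki : k ≠ i := (Finset.mem_erase.mp hk).1
                simp [hki, hkj])
          simp only at hsum
          rw [hsum]
          have e1 : (if i = i then ε else if i = j then 1 - ε else 0) = ε := if_pos rfl
          have e2 : (if j = i then ε else if j = j then 1 - ε else 0) = 1 - ε := by
            rw [if_neg hji, if_pos rfl]
          simp only [hji, ite_true, ite_false, eq_self_iff_true, if_true, if_false]
          apply glm_vec_eq _ _ _ _ hvsum (psum N hN j hjN) (psum N hN i hi)
          have e0 : (if (0 : Fin 2) = 0 then c i else 1 - c i) = c i := if_pos rfl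
          rw [e0, hε]
          field_simp [hMc.ne']
          ring
end
end

section
/- Proposition 1 (sharp identification in GLM): Fix an agent i ∈ 𝒜 and a vector v ∈ Δ(X). There exist, for each N ∈ 𝒩_i, reals π_i^N(j) ≥ 0 (j ∈ N) with π_i^N(i) > 0 and Σ_{j∈N} π_i^N(j) = 1 such that p_i^N = π_i^N(i)·v + Σ_{j∈N∖{i}} π_i^N(j)·p_j^N for every N ∈ 𝒩_i, if and only if v ∈ ⋂_{N∈𝒩_i} co⁻¹(Δ(p^N), p_i^N). Equivalently, the sharp identified set for v_i in GLM equals ⋂_{N∈𝒩_i} co⁻¹(Δ(p^N), p_i^N). -/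
/-!
Solving the mixture equation `p_i = π_i v + ∑_{j ≠ i} π_j p_j` for `v` gives
`v = π_i⁻¹ p_i - ∑_{j ≠ i} (π_j / π_i) p_j`, an affine combination whose weights off `i` are
`≤ 0`; the same pivot on the `i`-th coefficient turns such an affine combination back into a
mixture with `π_i > 0`, so the two descriptions of `v` match for every group separately.
-/

open Finset
open scoped Classical

noncomputable section

namespace Pivot

variable {A : Type*} [DecidableEq A]

/-- The coefficients obtained by solving `a = α i • b + ∑_{j ≠ i} α j • w j` for `b`. -/
def pivot (α : A → ℝ) (i : A) : A → ℝ :=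
  Function.update (fun j => -α j / α i) i (α i)⁻¹

variable {α : A → ℝ} {i j : A}

lemma pivot_self : pivot α i i = (α i)⁻¹ := Function.update_self ..

lemma pivot_of_ne (h : j ≠ i) : pivot α i j = -α j / α i := Function.update_of_ne h ..

lemma pivot_self_pos (hα : 0 < α i) : 0 < pivot α i i := by
  rw [pivot_self]; exact inv_pos.mpr hα

lemma pivot_nonpos_of_ne (hα : 0 < α i) (hj : 0 ≤ α j) (h : j ≠ i) : pivot α i j ≤ 0 := by
  rw [pivot_of_ne h, neg_div]; exact neg_nonpos.mpr (div_nonneg hj hα.le)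

lemma pivot_nonneg_of_ne (hα : 0 < α i) (hj : α j ≤ 0) (h : j ≠ i) : 0 ≤ pivot α i j := by
  rw [pivot_of_ne h, neg_div]; exact neg_nonneg.mpr (div_nonpos_of_nonpos_of_nonneg hj hα.le)

variable {N : Finset A}

lemma sum_pivot (hi : i ∈ N) (hα : α i ≠ 0) (hsum : ∑ j ∈ N, α j = 1) :
    ∑ j ∈ N, pivot α i j = 1 := by
  have hrest : ∑ j ∈ N.erase i, α j = 1 - α i := by
    rw [← hsum, ← add_sum_erase N α hi, add_sub_cancel_left]
  rw [← add_sum_erase N _ hi, pivot_self,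
    sum_congr rfl fun j hj => pivot_of_ne (ne_of_mem_erase hj), ← sum_div, sum_neg_distrib, hrest]
  field_simp
  ring

lemma eq_pivot_combination {E : Type*} [AddCommGroup E] [Module ℝ E] (w : A → E) {a b : E}
    (hα : α i ≠ 0) (h : a = α i • b + ∑ j ∈ N.erase i, α j • w j) :
    b = pivot α i i • a + ∑ j ∈ N.erase i, pivot α i j • w j := by
  have hrest : ∑ j ∈ N.erase i, pivot α i j • w j = -(α i)⁻¹ • ∑ j ∈ N.erase i, α j • w j := by
    rw [smul_sum]
    refine sum_congr rfl fun j hj => ?_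
    rw [pivot_of_ne (ne_of_mem_erase hj), smul_smul, neg_div, div_eq_inv_mul, neg_mul]
  rw [pivot_self, hrest, h, smul_add, smul_smul, inv_mul_cancel₀ hα, one_smul, neg_smul,
    add_neg_cancel_right]

end Pivot

open Pivot

theorem exists_mixture_iff_exists_affine_combination {A E : Type*} [DecidableEq A]
    [AddCommGroup E] [Module ℝ E] {N : Finset A} {i : A} (hi : i ∈ N) (w : A → E) (v : E) :
    (∃ π : A → ℝ, (∀ j ∈ N, 0 ≤ π j) ∧ 0 < π i ∧ ∑ j ∈ N, π j = 1 ∧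
        w i = π i • v + ∑ j ∈ N.erase i, π j • w j) ↔
      ∃ γ : A → ℝ, (∀ j ∈ N.erase i, γ j ≤ 0) ∧ ∑ j ∈ N, γ j = 1 ∧
        v = ∑ j ∈ N, γ j • w j := by
  constructor
  · rintro ⟨π, hπ_nonneg, hπi, hπ_sum, hπ_eq⟩
    refine ⟨pivot π i, fun j hj => ?_, sum_pivot hi hπi.ne' hπ_sum, ?_⟩
    · exact pivot_nonpos_of_ne hπi (hπ_nonneg j (mem_of_mem_erase hj)) (ne_of_mem_erase hj)
    · rw [← add_sum_erase N _ hi]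
      exact eq_pivot_combination w hπi.ne' hπ_eq
  · rintro ⟨γ, hγ_nonpos, hγ_sum, hγ_eq⟩
    have hγi : 0 < γ i := by
      have hrest : ∑ j ∈ N.erase i, γ j ≤ 0 := sum_nonpos hγ_nonpos
      linarith [add_sum_erase N γ hi]
    refine ⟨pivot γ i, fun j hj => ?_, pivot_self_pos hγi, sum_pivot hi hγi.ne' hγ_sum, ?_⟩
    · rcases eq_or_ne j i with rfl | hji
      · exact (pivot_self_pos hγi).le
      · exact pivot_nonneg_of_ne hγi (hγ_nonpos j (mem_erase.mpr ⟨hji, hj⟩)) hji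
    · rw [← add_sum_erase N _ hi] at hγ_eq
      exact eq_pivot_combination w hγi.ne' hγ_eq

theorem glm_sharp_identification_general
    {X A : Type*} [Fintype X] [DecidableEq A]
    (𝒩 : Finset (Finset A))
    (p : Finset A → A → X → ℝ)
    (i : A) (v : X → ℝ) (hv : v ∈ simplex X) :
    (∀ N ∈ 𝒩.filter (fun N => i ∈ N), ∃ π : A → ℝ,
        (∀ j ∈ N, 0 ≤ π j) ∧ 0 < π i ∧ (∑ j ∈ N, π j) = 1 ∧
        p N i = π i • v + ∑ j ∈ N.erase i, π j • p N j) ↔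
      v ∈ ⋂ N ∈ 𝒩.filter (fun N => i ∈ N), invCone p N i := by
  simp only [Set.mem_iInter]
  refine forall₂_congr fun N hN => ?_
  rw [exists_mixture_iff_exists_affine_combination (mem_filter.mp hN).2]
  exact (and_iff_right hv).symm

/-- Proposition 1: the sharp identified set for agent i's ideal point in GLM is
⋂_{N ∈ 𝒩_i} co⁻¹(Δ(p^N), p_i^N). -/
theorem glm_sharp_identification
    {X A : Type*} [Fintype X] [Fintype A] [DecidableEq A]
    (hX : 2 ≤ Fintype.card X) (hA : 2 ≤ Fintype.card A)
    (𝒩 : Finset (Finset A)) (h𝒩 : 𝒩.Nonempty) (h𝒩' : ∀ N ∈ 𝒩, N.Nonempty)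
    (p : Finset A → A → X → ℝ) (hp : ∀ N ∈ 𝒩, ∀ i ∈ N, p N i ∈ simplex X)
    (i : A) (v : X → ℝ) (hv : v ∈ simplex X) :
    (∀ N ∈ 𝒩.filter (fun N => i ∈ N), ∃ π : A → ℝ,
        (∀ j ∈ N, 0 ≤ π j) ∧ 0 < π i ∧ (∑ j ∈ N, π j) = 1 ∧
        p N i = π i • v + ∑ j ∈ N.erase i, π j • p N j) ↔
      v ∈ ⋂ N ∈ 𝒩.filter (fun N => i ∈ N), invCone p N i :=
  glm_sharp_identification_general 𝒩 p i v hv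
end
end

section
/- Corollary 2 (point identification of the ideal point): Let i, j, k ∈ 𝒜 and suppose N_j = {i, j} ∈ 𝒩 and N_k = {i, k} ∈ 𝒩. Suppose the dataset {p^N}_{N∈𝒩} is consistent with the general linear-in-means model, that p_i^{N_j} ≠ p_j^{N_j} and p_i^{N_k} ≠ p_k^{N_k} (i.e. N_j, N_k ∈ 𝒩_i^{ext}), and that the vectors p_i^{N_j} − p_j^{N_j} and p_i^{N_k} − p_k^{N_k} in ℝ^X are linearly independent. Then the set ⋂_{N∈𝒩_i} co⁻¹(Δ(p^N), p_i^N) is a singleton; that is, v_i is point identified. -/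
/-
The GLM equation for agent `i` in group `N` can be solved for `v i`, exhibiting it as an affine
combination of the group's choices with nonpositive weights on the others, so the
true ideal point lies in every inverse cone. In a two-agent group `{i, l}` the inverse cone is
contained in the line through `p i` with direction `p i - p l`. Two such lines with linearly
independent directions meet in at most one point, so the intersection is exactly `{v i}`.
-/

open Finset
open scoped Classical

noncomputable section

theorem LinearIndependent.eq_zero_of_mem_span_singleton_pair {R M : Type*} [Ring R]
    [AddCommGroup M] [Module R M] {x y z : M} (h : LinearIndependent R ![x, y])
    (hx : z ∈ R ∙ x) (hy : z ∈ R ∙ y) : z = 0 := by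
  obtain ⟨s, rfl⟩ := Submodule.mem_span_singleton.mp hx
  obtain ⟨t, hts⟩ := Submodule.mem_span_singleton.mp hy
  rw [(h.eq_zero_of_pair' hts.symm).1, zero_smul]

section InvCone

variable {X A : Type*} [Fintype X] [DecidableEq A]

theorem sum_update_smul_eq_inv_smul {M : Type*} [AddCommGroup M] [Module ℝ M] {N : Finset A}
    {i : A} (hi : i ∈ N) (π : A → ℝ) (f : A → M) :
    ∑ j ∈ N, Function.update (fun j => -(π j / π i)) i (π i)⁻¹ j • f j
      = (π i)⁻¹ • (f i - ∑ j ∈ N.erase i, π j • f j) := by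
  rw [← add_sum_erase N _ hi, smul_sub, smul_sum, sub_eq_add_neg, ← sum_neg_distrib,
    Function.update_self]
  refine congrArg _ (sum_congr rfl fun j hj => ?_)
  rw [Function.update_of_ne (ne_of_mem_erase hj), smul_smul, ← neg_smul, div_eq_inv_mul]

theorem mem_invCone_of_glm_eq {p : Finset A → A → X → ℝ} {N : Finset A} {i : A} (hi : i ∈ N)
    {v : X → ℝ} (hv : v ∈ simplex X) {π : A → ℝ} (hπ : ∀ j ∈ N, 0 ≤ π j) (hπi : 0 < π i)
    (hπsum : ∑ j ∈ N, π j = 1) (hp : p N i = π i • v + ∑ j ∈ N.erase i, π j • p N j) :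
    v ∈ invCone p N i := by
  refine ⟨hv, Function.update (fun j => -(π j / π i)) i (π i)⁻¹, fun j hj => ?_, ?_, ?_⟩
  · rw [Function.update_of_ne (ne_of_mem_erase hj)]
    exact neg_nonpos.mpr (div_nonneg (hπ j (mem_of_mem_erase hj)) hπi.le)
  · have hrest : ∑ j ∈ N.erase i, π j = 1 - π i := by
      rw [← hπsum, ← add_sum_erase N _ hi, add_sub_cancel_left]
    simpa [hrest, hπi.ne'] using sum_update_smul_eq_inv_smul hi π (fun _ => (1 : ℝ))
  · rw [sum_update_smul_eq_inv_smul hi, hp, add_sub_cancel_right, inv_smul_smul₀ hπi.ne']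

theorem sub_mem_span_of_mem_invCone_pair {p : Finset A → A → X → ℝ} {i l : A} {w : X → ℝ}
    (hw : w ∈ invCone p {i, l} i) :
    w - p {i, l} i ∈ ℝ ∙ (p {i, l} i - p {i, l} l) := by
  obtain ⟨-, γ, -, hγ_sum, rfl⟩ := hw
  have hdiff : ∀ j ∈ ({i, l} : Finset A),
      p {i, l} j - p {i, l} i ∈ ℝ ∙ (p {i, l} i - p {i, l} l) := by
    intro j hj
    rcases mem_insert.mp hj with rfl | hj
    · rw [sub_self]; exact Submodule.zero_mem _
    · rw [mem_singleton.mp hj]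
      exact Submodule.mem_span_singleton.mpr ⟨-1, by simp⟩
  have hexpand : ∑ j ∈ ({i, l} : Finset A), γ j • p {i, l} j - p {i, l} i
      = ∑ j ∈ ({i, l} : Finset A), γ j • (p {i, l} j - p {i, l} i) := by
    simp_rw [smul_sub, sum_sub_distrib, ← sum_smul, hγ_sum, one_smul]
  rw [hexpand]
  exact Submodule.sum_mem _ fun j hj => Submodule.smul_mem _ _ (hdiff j hj)

theorem eq_of_mem_invCone_pair_of_linearIndependent {p : Finset A → A → X → ℝ} {i j k : A}
    (hli : LinearIndependent ℝ ![p {i, j} i - p {i, j} j, p {i, k} i - p {i, k} k])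
    {w w' : X → ℝ} (hwj : w ∈ invCone p {i, j} i) (hwk : w ∈ invCone p {i, k} i)
    (hwj' : w' ∈ invCone p {i, j} i) (hwk' : w' ∈ invCone p {i, k} i) : w = w' := by
  have hline : ∀ {l : A} {u u' : X → ℝ}, u ∈ invCone p {i, l} i → u' ∈ invCone p {i, l} i →
      u - u' ∈ ℝ ∙ (p {i, l} i - p {i, l} l) := fun hu hu' => by
    simpa using Submodule.sub_mem _ (sub_mem_span_of_mem_invCone_pair hu)
      (sub_mem_span_of_mem_invCone_pair hu')
  exact sub_eq_zero.mp (hli.eq_zero_of_mem_span_singleton_pair (hline hwj hwj') (hline hwk hwk'))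

end InvCone

theorem glm_point_identification_general
    {X A : Type*} [Fintype X] [DecidableEq A]
    (𝒩 : Finset (Finset A))
    (p : Finset A → A → X → ℝ)
    (i j k : A)
    (hNj : ({i, j} : Finset A) ∈ 𝒩) (hNk : ({i, k} : Finset A) ∈ 𝒩)
    (hGLM : GLMConsistent 𝒩 p)
    (hli : LinearIndependent ℝ
      ![p ({i, j} : Finset A) i - p ({i, j} : Finset A) j,
        p ({i, k} : Finset A) i - p ({i, k} : Finset A) k]) :
    ∃ v : X → ℝ, (⋂ N ∈ 𝒩.filter (fun N => i ∈ N), invCone p N i) = {v} := by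
  obtain ⟨v, hv, hglm⟩ := hGLM
  have hv_mem : ∀ N ∈ 𝒩, i ∈ N → v i ∈ invCone p N i := fun N hN hi => by
    obtain ⟨π, hπ, hπi, hπsum, hp⟩ := hglm N hN i hi
    exact mem_invCone_of_glm_eq hi (hv i) hπ hπi hπsum hp
  refine ⟨v i, Set.eq_singleton_iff_unique_mem.mpr ⟨?_, fun w hw => ?_⟩⟩
  · simpa only [Set.mem_iInter, mem_filter, and_imp] using hv_mem
  · simp only [Set.mem_iInter, mem_filter, and_imp] at hw
    have hij : i ∈ ({i, j} : Finset A) := mem_insert_self i _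
    have hik : i ∈ ({i, k} : Finset A) := mem_insert_self i _
    exact eq_of_mem_invCone_pair_of_linearIndependent hli (hw _ hNj hij) (hw _ hNk hik)
      (hv_mem _ hNj hij) (hv_mem _ hNk hik)

/-- Corollary 2: point identification of agent i's ideal point from two binary groups
with linearly independent choice differences. -/
theorem glm_point_identification
    {X A : Type*} [Fintype X] [Fintype A] [DecidableEq A]
    (hX : 2 ≤ Fintype.card X) (hA : 2 ≤ Fintype.card A)
    (𝒩 : Finset (Finset A)) (h𝒩 : 𝒩.Nonempty) (h𝒩' : ∀ N ∈ 𝒩, N.Nonempty)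
    (p : Finset A → A → X → ℝ) (hp : ∀ N ∈ 𝒩, ∀ i ∈ N, p N i ∈ simplex X)
    (i j k : A)
    (hNj : ({i, j} : Finset A) ∈ 𝒩) (hNk : ({i, k} : Finset A) ∈ 𝒩)
    (hGLM : GLMConsistent 𝒩 p)
    (hextj : p ({i, j} : Finset A) i ≠ p ({i, j} : Finset A) j)
    (hextk : p ({i, k} : Finset A) i ≠ p ({i, k} : Finset A) k)
    (hli : LinearIndependent ℝ
      ![p ({i, j} : Finset A) i - p ({i, j} : Finset A) j,
        p ({i, k} : Finset A) i - p ({i, k} : Finset A) k]) :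
    ∃ v : X → ℝ, (⋂ N ∈ 𝒩.filter (fun N => i ∈ N), invCone p N i) = {v} :=
  glm_point_identification_general 𝒩 p i j k hNj hNk hGLM hli
end
end

section
/- Proposition 3 (identification of Luce weights): Fix an agent i ∈ 𝒜 and v_i ∈ Δ(X). Suppose the dataset {p^N}_{N∈𝒩} admits two Luce linear-in-means representations that both use v_i as agent i's ideal point, with weight functions w_i and w'_i for agent i (each nonnegative on 𝒜, strictly positive at i, summing to 1 over 𝒜). If every pair of distinct agents j ≠ k is comparable by agent i, then w_i = w'_i; i.e. the Luce weights w_i(j) are point identified for all j ∈ 𝒜. -/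
open Finset
open scoped Classical

noncomputable section

/-- A Luce linear-in-means representation for agent i with ideal point v and Luce
weights w. -/
def LuceRep {X A : Type*} [Fintype X] [Fintype A] [DecidableEq A]
    (𝒩 : Finset (Finset A)) (p : Finset A → A → X → ℝ)
    (i : A) (v : X → ℝ) (w : A → ℝ) : Prop :=
  (∀ j, 0 ≤ w j) ∧ 0 < w i ∧ (∑ j, w j) = 1 ∧
    ∀ N ∈ 𝒩, i ∈ N →
      p N i = (w i / ∑ k ∈ N, w k) • v +
        ∑ j ∈ N.erase i, (w j / ∑ k ∈ N, w k) • p N j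

/-- Agents j and k are comparable by agent i (given ideal point v). -/
def ComparableBy {X A : Type*} [Fintype X] [DecidableEq A]
    (𝒩 : Finset (Finset A)) (p : Finset A → A → X → ℝ)
    (i : A) (v : X → ℝ) (j k : A) : Prop :=
  ∃ N1 ∈ 𝒩, ∃ N2 ∈ 𝒩, i ∈ N1 ∧ i ∈ N2 ∧ j ∈ N1 ∧ k ∈ N2 ∧
    AffineIndependent ℝ
      (fun m : {m // m ∈ N1} => if (m : A) = i then v else p N1 (m : A)) ∧
    AffineIndependent ℝ
      (fun m : {m // m ∈ N2} => if (m : A) = i then v else p N2 (m : A))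

/-- If one representation holds on a group N where the family (v together with the
p N j's) is affinely independent, then the coefficients are determined. -/
lemma luce_combination_eq {X A : Type*} [Fintype X] [Fintype A] [DecidableEq A]
    (𝒩 : Finset (Finset A)) (p : Finset A → A → X → ℝ)
    (i : A) (v : X → ℝ) (w : A → ℝ)
    (hw : LuceRep 𝒩 p i v w)
    (N : Finset A) (hN : N ∈ 𝒩) (hiN : i ∈ N) :
    Finset.univ.affineCombination ℝ
      (fun m : {m // m ∈ N} => if (m : A) = i then v else p N (m : A))
      (fun m : {m // m ∈ N} => w (m : A) / (∑ k ∈ N, w k)) = p N i ∧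
    (∑ m : {m // m ∈ N}, w (m : A) / (∑ k ∈ N, w k)) = 1 := by
  obtain ⟨hnn, hpos, _, hrep⟩ := hw
  have hS : (0:ℝ) < ∑ k ∈ N, w k :=
    lt_of_lt_of_le hpos (Finset.single_le_sum (fun k _ => hnn k) hiN)
  have hsum : (∑ m : {m // m ∈ N}, w (m : A) / (∑ k ∈ N, w k)) = 1 := by
    rw [← Finset.sum_div, Finset.sum_coe_sort N w, div_self hS.ne']
  refine ⟨?_, hsum⟩
  rw [Finset.affineCombination_eq_linear_combination _ _ _ hsum]
  have : (∑ m : {m // m ∈ N}, (w (m : A) / (∑ k ∈ N, w k)) •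
      (if (m : A) = i then v else p N (m : A))) =
      ∑ m ∈ N, (w m / (∑ k ∈ N, w k)) • (if m = i then v else p N m) :=
    Finset.sum_coe_sort N (fun m => (w m / (∑ k ∈ N, w k)) • (if m = i then v else p N m))
  rw [this, ← Finset.add_sum_erase _ _ hiN, if_pos rfl]
  have herase : (∑ m ∈ N.erase i, (w m / (∑ k ∈ N, w k)) • (if m = i then v else p N m)) =
      ∑ m ∈ N.erase i, (w m / (∑ k ∈ N, w k)) • p N m := by
    refine Finset.sum_congr rfl fun m hm => ?_
    rw [if_neg (Finset.ne_of_mem_erase hm)]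
  rw [herase, ← hrep N hN hiN]

lemma luce_ratio_eq {X A : Type*} [Fintype X] [Fintype A] [DecidableEq A]
    (𝒩 : Finset (Finset A)) (p : Finset A → A → X → ℝ)
    (i : A) (v : X → ℝ) (w w' : A → ℝ)
    (hw : LuceRep 𝒩 p i v w) (hw' : LuceRep 𝒩 p i v w')
    (N : Finset A) (hN : N ∈ 𝒩) (hiN : i ∈ N)
    (hai : AffineIndependent ℝ
      (fun m : {m // m ∈ N} => if (m : A) = i then v else p N (m : A))) :
    ∀ j ∈ N, w j / (∑ k ∈ N, w k) = w' j / (∑ k ∈ N, w' k) := by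
  obtain ⟨h1, hs1⟩ := luce_combination_eq 𝒩 p i v w hw N hN hiN
  obtain ⟨h2, hs2⟩ := luce_combination_eq 𝒩 p i v w' hw' N hN hiN
  have hind := hai.indicator_eq_of_affineCombination_eq Finset.univ Finset.univ
    _ _ hs1 hs2 (h1.trans h2.symm)
  simp only [Finset.coe_univ, Set.indicator_univ] at hind
  intro j hj
  exact congrFun hind ⟨j, hj⟩

/-- Proposition 3: identification of the Luce weights. -/
theorem luce_weight_identification
    {X A : Type*} [Fintype X] [Fintype A] [DecidableEq A]
    (hX : 2 ≤ Fintype.card X) (hA : 2 ≤ Fintype.card A)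
    (𝒩 : Finset (Finset A)) (h𝒩 : 𝒩.Nonempty) (h𝒩' : ∀ N ∈ 𝒩, N.Nonempty)
    (p : Finset A → A → X → ℝ) (hp : ∀ N ∈ 𝒩, ∀ i ∈ N, p N i ∈ simplex X)
    (i : A) (v : X → ℝ) (hv : v ∈ simplex X)
    (w w' : A → ℝ)
    (hw : LuceRep 𝒩 p i v w) (hw' : LuceRep 𝒩 p i v w')
    (hcomp : ∀ j k : A, j ≠ k → ComparableBy 𝒩 p i v j k) :
    w = w' := by
  have key : ∀ j : A, w j * w' i = w' j * w i := by
    intro j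
    by_cases hji : j = i
    · subst hji; ring
    · obtain ⟨N1, hN1, N2, hN2, hiN1, hiN2, hjN1, hkN2, hai1, hai2⟩ := hcomp j i hji
      have hS : (0:ℝ) < ∑ k ∈ N1, w k :=
        lt_of_lt_of_le hw.2.1 (Finset.single_le_sum (fun k _ => hw.1 k) hiN1)
      have hS' : (0:ℝ) < ∑ k ∈ N1, w' k :=
        lt_of_lt_of_le hw'.2.1 (Finset.single_le_sum (fun k _ => hw'.1 k) hiN1)
      have hj := luce_ratio_eq 𝒩 p i v w w' hw hw' N1 hN1 hiN1 hai1 j hjN1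
      have hi := luce_ratio_eq 𝒩 p i v w w' hw hw' N1 hN1 hiN1 hai1 i hiN1
      rw [div_eq_div_iff hS.ne' hS'.ne'] at hj hi
      have : w j * w' i * (∑ k ∈ N1, w' k) = w' j * w i * (∑ k ∈ N1, w' k) := by
        linear_combination (w' i) * hj - (w' j) * hi
      exact mul_right_cancel₀ hS'.ne' this
  have hsum : (∑ j, w j * w' i) = ∑ j, w' j * w i := Finset.sum_congr rfl fun j _ => key j
  rw [← Finset.sum_mul, ← Finset.sum_mul, hw.2.2.1, hw'.2.2.1, one_mul, one_mul] at hsum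
  funext j
  have := key j
  rw [hsum] at this
  exact mul_right_cancel₀ hw.2.1.ne' this
end
end

section
/- Theorem 2 (characterization of the Luce linear-in-means model): A dataset {p^N}_{N∈𝒩} is consistent with the Luce linear-in-means model if and only if it satisfies no weakly incentive compatible money pump, i.e. for every agent i ∈ 𝒜 there is no family (b^N)_{N∈𝒩_i} of vectors in ℝ^X such that (a) Σ_{N∈𝒩_i} b^N has all coordinates strictly negative, (b) b^N · p_i^N > 0 for every N ∈ 𝒩_i, and (c) for every j ≠ i, Σ_{N∈𝒩_i∩𝒩_j} b^N · (p_i^N − p_j^N) ≥ 0. -/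
/-!
Writing `μ j = w_i(j) / w_i(i)`, the model equation of agent `i` in group `N` says exactly that
`v_i = p_i^N + ∑_{j ∈ N ∖ {i}} μ j • (p_i^N - p_j^N)`. So consistency splits into one linear
feasibility problem per agent, in the unknowns `v_i ∈ Δ(X)` and `μ ≥ 0`. Pairing this identity
with a money pump `b` and summing over `N ∋ i` makes `(∑_N b^N) · v_i` positive by (b) and (c),
while (a) and `v_i ∈ Δ(X)` make it nonpositive; so even pumps with weak inequalities are excluded.
Conversely, by Farkas' lemma an infeasible problem has a separating certificate, which is a weak
money pump, and adding suitable constants to its components makes it strict.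
-/

open Finset
open scoped Classical

noncomputable section

/-- Dot product on ℝ^X. -/
def dot {X : Type*} [Fintype X] (a b : X → ℝ) : ℝ := ∑ x, a x * b x

/-- Consistency with the Luce linear-in-means model (LLM). -/
def LLMConsistent {X A : Type*} [Fintype X] [Fintype A] [DecidableEq A]
    (𝒩 : Finset (Finset A)) (p : Finset A → A → X → ℝ) : Prop :=
  ∃ (v : A → X → ℝ) (w : A → A → ℝ),
    (∀ i, v i ∈ simplex X) ∧
    (∀ i j, 0 ≤ w i j) ∧ (∀ i, 0 < w i i) ∧ (∀ i, (∑ j, w i j) = 1) ∧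
    ∀ N ∈ 𝒩, ∀ i ∈ N,
      p N i = (w i i / ∑ k ∈ N, w i k) • v i +
        ∑ j ∈ N.erase i, (w i j / ∑ k ∈ N, w i k) • p N j

section Farkas

variable {𝕜 D ι : Type*} [Field 𝕜] [LinearOrder 𝕜] [IsStrictOrderedRing 𝕜] [Fintype D]

lemma dotProduct_self_pos {c : D → 𝕜} (hc : c ≠ 0) : 0 < c ⬝ᵥ c :=
  (Fintype.sum_nonneg fun _ => mul_self_nonneg _).lt_of_ne' (dotProduct_self_eq_zero.not.mpr hc)

/-- **Farkas' lemma** for a finitely generated cone. -/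
theorem mem_cone_or_exists_separating [DecidableEq ι] (s : Finset ι) (a : ι → D → 𝕜)
    (c : D → 𝕜) :
    (∃ μ : ι → 𝕜, 0 ≤ μ ∧ c = ∑ k ∈ s, μ k • a k) ∨
      ∃ y : D → 𝕜, (∀ k ∈ s, y ⬝ᵥ a k ≤ 0) ∧ 0 < y ⬝ᵥ c := by
  induction s using Finset.induction generalizing a c with
  | empty =>
    by_cases hc : c = 0
    · exact .inl ⟨0, le_rfl, by simp [hc]⟩
    · exact .inr ⟨c, by simp, dotProduct_self_pos hc⟩
  | insert k₀ s hk₀ ih =>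
    have extend : ∀ t : 𝕜, 0 ≤ t → ∀ μ : ι → 𝕜, 0 ≤ μ → c = t • a k₀ + ∑ k ∈ s, μ k • a k →
        ∃ μ' : ι → 𝕜, 0 ≤ μ' ∧ c = ∑ k ∈ insert k₀ s, μ' k • a k := by
      intro t ht μ hμ hc
      refine ⟨Function.update μ k₀ t, le_update_iff.2 ⟨ht, fun k _ => hμ k⟩, ?_⟩
      rw [Finset.sum_insert hk₀, Function.update_self, hc]
      congr 1
      exact Finset.sum_congr rfl fun k hk => by
        rw [Function.update_of_ne (ne_of_mem_of_not_mem hk hk₀)]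
    obtain ⟨μ, hμ, hc⟩ | ⟨y, hy, hcy⟩ := ih a c
    · exact .inl (extend 0 le_rfl μ hμ (by rw [hc, zero_smul, zero_add]))
    by_cases hy₀ : y ⬝ᵥ a k₀ ≤ 0
    · exact .inr ⟨y, Finset.forall_mem_insert _ _ _ |>.mpr ⟨hy₀, hy⟩, hcy⟩
    push Not at hy₀
    -- Project along `a k₀` onto the hyperplane `y ⬝ᵥ · = 0` and recurse there.
    let r : (D → 𝕜) → 𝕜 := fun u => y ⬝ᵥ u / y ⬝ᵥ a k₀
    obtain ⟨μ, hμ, hc'⟩ | ⟨z, hz, hcz⟩ := ih (fun k => a k - r (a k) • a k₀) (c - r c • a k₀)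
    · left
      refine extend (r c - ∑ k ∈ s, μ k * r (a k)) ?_ μ hμ ?_
      · have hr : ∀ k ∈ s, μ k * r (a k) ≤ 0 := fun k hk =>
          mul_nonpos_of_nonneg_of_nonpos (hμ k) (div_nonpos_of_nonpos_of_nonneg (hy k hk) hy₀.le)
        linarith [Finset.sum_nonpos hr, div_pos hcy hy₀]
      · have h := sub_eq_zero.mpr hc'
        simp only [smul_sub, smul_smul, Finset.sum_sub_distrib, ← Finset.sum_smul] at h
        rw [← sub_eq_zero, ← h, sub_smul]
        abel
    · right
      let w : D → 𝕜 := z - (z ⬝ᵥ a k₀ / y ⬝ᵥ a k₀) • y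
      have hw : ∀ u, w ⬝ᵥ u = z ⬝ᵥ (u - r u • a k₀) := fun u => by
        simp only [w, r, sub_dotProduct, dotProduct_sub, smul_dotProduct, dotProduct_smul,
          smul_eq_mul]
        ring
      refine ⟨w, Finset.forall_mem_insert _ _ _ |>.mpr ⟨?_, fun k hk => (hw _).trans_le (hz k hk)⟩,
        (hw c).symm ▸ hcz⟩
      rw [hw, show r (a k₀) = 1 from div_self hy₀.ne', one_smul, sub_self, dotProduct_zero]

end Farkas

section LuceEquation

variable {𝕜 E ι : Type*} [Field 𝕜] [AddCommGroup E] [Module 𝕜 E] [DecidableEq ι]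

theorem eq_luce_average_iff {N : Finset ι} {i : ι} (hi : i ∈ N) {w : ι → 𝕜} (hwi : w i ≠ 0)
    (hW : ∑ k ∈ N, w k ≠ 0) (v : E) (q : ι → E) :
    q i = (w i / ∑ k ∈ N, w k) • v + ∑ j ∈ N.erase i, (w j / ∑ k ∈ N, w k) • q j ↔
      v = q i + ∑ j ∈ N.erase i, (w j / w i) • (q i - q j) := by
  have hlhs : (w i / ∑ k ∈ N, w k) • v + ∑ j ∈ N.erase i, (w j / ∑ k ∈ N, w k) • q j =
      (∑ k ∈ N, w k)⁻¹ • (w i • v + ∑ j ∈ N.erase i, w j • q j) := by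
    simp only [div_eq_inv_mul, mul_smul, smul_add, Finset.smul_sum]
  have hrhs : q i + ∑ j ∈ N.erase i, (w j / w i) • (q i - q j) =
      (w i)⁻¹ • (w i • q i + ∑ j ∈ N.erase i, w j • (q i - q j)) := by
    simp only [div_eq_inv_mul, mul_smul, smul_add, Finset.smul_sum, inv_smul_smul₀ hwi]
  have hW' : (∑ k ∈ N, w k) • q i = w i • q i + ∑ j ∈ N.erase i, w j • q i := by
    rw [← Finset.add_sum_erase N w hi, add_smul, Finset.sum_smul]
  rw [hlhs, hrhs, eq_comm, inv_smul_eq_iff₀ hW, eq_inv_smul_iff₀ hwi, hW']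
  simp only [smul_sub, Finset.sum_sub_distrib]
  constructor <;> intro h <;> linear_combination (norm := module) h

end LuceEquation

section MoneyPump

variable {X A : Type*} [Fintype X] [DecidableEq A]

lemma dot_eq_dotProduct (a b : X → ℝ) : dot a b = a ⬝ᵥ b := rfl

lemma dotProduct_one_of_mem_simplex {v : X → ℝ} (hv : v ∈ simplex X) : v ⬝ᵥ 1 = 1 := by
  rw [dotProduct_comm, one_dotProduct, hv.2]

/-- `μ j` plays the role of the relative weight `w_i(j) / w_i(i)`. -/
def IsLuceRationalization (𝒩 : Finset (Finset A)) (p : Finset A → A → X → ℝ) (i : A)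
    (v : X → ℝ) (μ : A → ℝ) : Prop :=
  v ∈ simplex X ∧ 0 ≤ μ ∧
    ∀ N ∈ 𝒩, i ∈ N → v = p N i + ∑ j ∈ N.erase i, μ j • (p N i - p N j)

def IsMoneyPump (𝒩 : Finset (Finset A)) (p : Finset A → A → X → ℝ) (i : A)
    (b : Finset A → X → ℝ) : Prop :=
  (∀ x : X, (∑ N ∈ 𝒩.filter (fun N => i ∈ N), b N x) < 0) ∧
    (∀ N ∈ 𝒩.filter (fun N => i ∈ N), 0 < dot (b N) (p N i)) ∧
    (∀ j : A, j ≠ i →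
      0 ≤ ∑ N ∈ 𝒩.filter (fun N => i ∈ N ∧ j ∈ N), dot (b N) (p N i - p N j))

def IsWeakMoneyPump (𝒩 : Finset (Finset A)) (p : Finset A → A → X → ℝ) (i : A)
    (b : Finset A → X → ℝ) : Prop :=
  (∀ x : X, (∑ N ∈ 𝒩.filter (fun N => i ∈ N), b N x) ≤ 0) ∧
    0 < ∑ N ∈ 𝒩.filter (fun N => i ∈ N), dot (b N) (p N i) ∧
    (∀ j : A, j ≠ i →
      0 ≤ ∑ N ∈ 𝒩.filter (fun N => i ∈ N ∧ j ∈ N), dot (b N) (p N i - p N j))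

variable {𝒩 : Finset (Finset A)} {p : Finset A → A → X → ℝ} {i : A}

theorem IsMoneyPump.isWeakMoneyPump [Nonempty X] {b : Finset A → X → ℝ}
    (h : IsMoneyPump 𝒩 p i b) : IsWeakMoneyPump 𝒩 p i b := by
  obtain ⟨hsum, hgain, hpair⟩ := h
  refine ⟨fun x => (hsum x).le, sum_pos hgain ?_, hpair⟩
  rw [nonempty_iff_ne_empty]
  rintro hF
  simpa [hF] using hsum (Classical.arbitrary X)

/-- Adding a constant to `b N` changes its gain on `p N i` but not on `p N i - p N j`, since both
`p N i` and `p N j` lie in the simplex. The constants make every gain `T / (#F + 1)`, where `T` is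
the total gain, so the sums in (a) drop by `T / (#F + 1)` and become negative. -/
theorem IsWeakMoneyPump.exists_isMoneyPump (hp : ∀ N ∈ 𝒩, ∀ i ∈ N, p N i ∈ simplex X)
    {b : Finset A → X → ℝ} (h : IsWeakMoneyPump 𝒩 p i b) : ∃ b', IsMoneyPump 𝒩 p i b' := by
  obtain ⟨hsum, hgain, hpair⟩ := h
  set F := 𝒩.filter (fun N => i ∈ N)
  set T := ∑ N ∈ F, dot (b N) (p N i)
  set ε := T / (#F + 1)
  have hε : 0 < ε := div_pos hgain (by positivity)
  have hdot : ∀ N u, dot (b N + (ε - dot (b N) (p N i)) • 1) u =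
      dot (b N) u + (ε - dot (b N) (p N i)) * (1 ⬝ᵥ u) := fun N u => by
    simp only [dot_eq_dotProduct, add_dotProduct, smul_dotProduct, smul_eq_mul]
  refine ⟨fun N => b N + (ε - dot (b N) (p N i)) • 1, fun x => ?_, fun N hN => ?_,
    fun j hj => ?_⟩
  · have : #F * ε - T < 0 := by
      have : (#F : ℝ) * ε - T = -ε := by simp only [ε]; field_simp; ring
      linarith
    simp only [Pi.add_apply, Pi.smul_apply, Pi.one_apply, smul_eq_mul, mul_one, sum_add_distrib,
      sum_sub_distrib, sum_const, nsmul_eq_mul]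
    linarith [hsum x]
  · obtain ⟨hN, hiN⟩ := mem_filter.1 hN
    rw [hdot, dotProduct_comm, dotProduct_one_of_mem_simplex (hp N hN i hiN)]
    linarith
  · refine (hpair j hj).trans_eq (sum_congr rfl fun N hN => ?_)
    obtain ⟨hN, hiN, hjN⟩ := mem_filter.1 hN
    rw [hdot, dotProduct_comm, sub_dotProduct, dotProduct_one_of_mem_simplex (hp N hN i hiN),
      dotProduct_one_of_mem_simplex (hp N hN j hjN)]
    ring

end MoneyPump

section LuceLinearInMeans

variable {X A : Type*} [Fintype X] [Fintype A] [DecidableEq A]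
  {𝒩 : Finset (Finset A)} {p : Finset A → A → X → ℝ} {i : A}

theorem llmConsistent_iff_forall_exists_isLuceRationalization :
    LLMConsistent 𝒩 p ↔ ∀ i, ∃ v μ, IsLuceRationalization 𝒩 p i v μ := by
  constructor
  · rintro ⟨v, w, hv, hw, hwii, -, hp⟩ i
    refine ⟨v i, fun j => w i j / w i i, hv i, fun j => div_nonneg (hw i j) (hwii i).le,
      fun N hN hiN => ?_⟩
    have hW : 0 < ∑ k ∈ N, w i k := (hwii i).trans_le (single_le_sum (fun k _ => hw i k) hiN)
    exact (eq_luce_average_iff hiN (hwii i).ne' hW.ne' _ _).1 (hp N hN i hiN)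
  · intro h
    choose v μ hv hμ hp using h
    -- Normalizing `μ'` gives weights whose ratios `w i j / w i i` are the `μ i j`.
    let μ' : A → A → ℝ := fun i => Function.update (μ i) i 1
    have hμ' : ∀ i, 0 ≤ μ' i := fun i => le_update_iff.2 ⟨zero_le_one, fun j _ => hμ i j⟩
    have hS : ∀ i, ∀ N : Finset A, i ∈ N → 0 < ∑ k ∈ N, μ' i k := fun i N hiN =>
      zero_lt_one.trans_le <| by
        simpa [μ'] using single_le_sum (fun k _ => hμ' i k) hiN
    refine ⟨v, fun i j => μ' i j / ∑ k, μ' i k, hv, fun i j => ?_, fun i => ?_, fun i => ?_,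
      fun N hN i hiN => ?_⟩
    · exact div_nonneg (hμ' i j) (hS i univ (mem_univ i)).le
    · simpa [μ'] using hS i univ (mem_univ i)
    · rw [← sum_div, div_self (hS i univ (mem_univ i)).ne']
    · have hSi := (hS i univ (mem_univ i)).ne'
      refine (eq_luce_average_iff (w := fun j => μ' i j / ∑ k, μ' i k) hiN
        (div_ne_zero (by simp [μ']) hSi) ?_ _ _).2 ?_
      · rw [← sum_div]; exact div_ne_zero (hS i N hiN).ne' hSi
      · refine (hp i N hN hiN).trans (congrArg _ (sum_congr rfl fun j hj => ?_))
        rw [div_div_div_cancel_right₀ hSi]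
        simp [μ', Function.update_of_ne (ne_of_mem_erase hj)]

lemma IsLuceRationalization.sum_dot_eq {v : X → ℝ} {μ : A → ℝ}
    (h : IsLuceRationalization 𝒩 p i v μ) (b : Finset A → X → ℝ) :
    ∑ N ∈ 𝒩.filter (fun N => i ∈ N), dot (b N) v =
      ∑ N ∈ 𝒩.filter (fun N => i ∈ N), dot (b N) (p N i) + ∑ j ∈ univ.erase i,
        μ j * ∑ N ∈ 𝒩.filter (fun N => i ∈ N ∧ j ∈ N), dot (b N) (p N i - p N j) := by
  have hN : ∀ N ∈ 𝒩.filter (fun N => i ∈ N), dot (b N) v =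
      dot (b N) (p N i) + ∑ j ∈ N.erase i, μ j * dot (b N) (p N i - p N j) := fun N hN => by
    rw [mem_filter] at hN
    simp only [h.2.2 N hN.1 hN.2, dot_eq_dotProduct, dotProduct_add, dotProduct_sum,
      dotProduct_smul, smul_eq_mul]
  rw [sum_congr rfl hN, sum_add_distrib, sum_comm' (t' := univ.erase i)
    (s' := fun j => 𝒩.filter (fun N => i ∈ N ∧ j ∈ N)) (fun N j => by simp; tauto)]
  simp only [mul_sum]

theorem IsLuceRationalization.not_isWeakMoneyPump {v : X → ℝ} {μ : A → ℝ}
    (h : IsLuceRationalization 𝒩 p i v μ) (b : Finset A → X → ℝ) :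
    ¬ IsWeakMoneyPump 𝒩 p i b := by
  rintro ⟨hsum, hgain, hpair⟩
  have hloss : ∑ N ∈ 𝒩.filter (fun N => i ∈ N), dot (b N) v ≤ 0 := by
    simp only [dot_eq_dotProduct, ← sum_dotProduct]
    exact (dotProduct_le_dotProduct_of_nonneg_right (fun x => by simpa using hsum x)
      h.1.1).trans_eq (zero_dotProduct v)
  have hpairs := sum_nonneg (s := univ.erase i) fun j hj =>
    mul_nonneg (h.2.1 j) (hpair j (ne_of_mem_erase hj))
  linarith [h.sum_dot_eq b]

def blockOn (S : Finset (Finset A)) (g : Finset A → X → ℝ) : Finset A × X → ℝ :=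
  fun q => if q.1 ∈ S then g q.1 q.2 else 0

lemma dotProduct_blockOn (y : Finset A × X → ℝ) (S : Finset (Finset A))
    (g : Finset A → X → ℝ) :
    y ⬝ᵥ blockOn S g = ∑ N ∈ S, dot (Function.curry y N) (g N) := by
  rw [dotProduct, Fintype.sum_prod_type, ← sum_subset (subset_univ S) fun N _ hN => by
    simp [blockOn, hN]]
  exact sum_congr rfl fun N hN => by simp [blockOn, hN, dot, Function.curry]

/-- A rationalization `(v, μ)` of agent `i` is a nonnegative combination of these columns,
with coefficients `v x` and `μ j`, equal to `rationalizationTarget 𝒩 p i`. -/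
def rationalizationColumn (𝒩 : Finset (Finset A)) (p : Finset A → A → X → ℝ) (i : A) :
    X ⊕ A → Finset A × X → ℝ
  | .inl x => blockOn (𝒩.filter (fun N => i ∈ N)) fun _ => Pi.single x 1
  | .inr j => blockOn (𝒩.filter (fun N => i ∈ N ∧ j ∈ N)) fun N => p N j - p N i

def rationalizationTarget (𝒩 : Finset (Finset A)) (p : Finset A → A → X → ℝ) (i : A) :
    Finset A × X → ℝ :=
  blockOn (𝒩.filter (fun N => i ∈ N)) fun N => p N i

lemma sum_smul_rationalizationColumn_apply (μ : X ⊕ A → ℝ) {N : Finset A} (hN : N ∈ 𝒩)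
    (hiN : i ∈ N) (x : X) :
    (∑ k, μ k • rationalizationColumn 𝒩 p i k) (N, x) =
      μ (.inl x) + ∑ j ∈ N.erase i, μ (.inr j) * (p N j x - p N i x) := by
  simp only [Finset.sum_apply, Pi.smul_apply, smul_eq_mul, Fintype.sum_sum_type,
    rationalizationColumn, blockOn, mem_filter, hN, hiN, true_and, Pi.single_apply, mul_ite,
    mul_one, mul_zero, sum_ite_eq, mem_univ, if_true, sum_ite_mem, univ_inter, Pi.sub_apply]
  rw [sum_erase _ (by simp)]

theorem isLuceRationalization_of_eq_sum_smul (hp : ∀ N ∈ 𝒩, ∀ i ∈ N, p N i ∈ simplex X)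
    (hF : (𝒩.filter (fun N => i ∈ N)).Nonempty) {μ : X ⊕ A → ℝ} (hμ : 0 ≤ μ)
    (h : rationalizationTarget 𝒩 p i = ∑ k, μ k • rationalizationColumn 𝒩 p i k) :
    IsLuceRationalization 𝒩 p i (fun x => μ (.inl x)) (fun j => μ (.inr j)) := by
  have heq : ∀ N ∈ 𝒩, i ∈ N →
      (fun x => μ (.inl x)) = p N i + ∑ j ∈ N.erase i, μ (.inr j) • (p N i - p N j) := by
    intro N hN hiN
    funext x
    have hx := congrFun h (N, x)
    rw [sum_smul_rationalizationColumn_apply μ hN hiN] at hx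
    simp only [rationalizationTarget, blockOn, mem_filter, hN, hiN, and_self, if_true] at hx
    simp only [Pi.add_apply, Finset.sum_apply, Pi.smul_apply, Pi.sub_apply, smul_eq_mul]
    linarith [show ∑ j ∈ N.erase i, μ (.inr j) * (p N i x - p N j x) =
      -∑ j ∈ N.erase i, μ (.inr j) * (p N j x - p N i x) by
        rw [← sum_neg_distrib]; exact sum_congr rfl fun j _ => by ring]
  obtain ⟨N, hN⟩ := hF
  obtain ⟨hN, hiN⟩ := mem_filter.1 hN
  refine ⟨⟨fun x => hμ _, ?_⟩, fun j => hμ _, heq⟩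
  have := congrArg (· ⬝ᵥ 1) (heq N hN hiN)
  simp only [add_dotProduct, sum_dotProduct, smul_dotProduct, sub_dotProduct,
    dotProduct_one_of_mem_simplex (hp N hN i hiN)] at this
  rw [← one_dotProduct, dotProduct_comm, this, sum_eq_zero fun j hj => by
    rw [dotProduct_one_of_mem_simplex (hp N hN j (mem_of_mem_erase hj)), sub_self, smul_zero]]
  simp

theorem isWeakMoneyPump_curry {y : Finset A × X → ℝ}
    (hcol : ∀ k, y ⬝ᵥ rationalizationColumn 𝒩 p i k ≤ 0)
    (htarget : 0 < y ⬝ᵥ rationalizationTarget 𝒩 p i) :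
    IsWeakMoneyPump 𝒩 p i (Function.curry y) := by
  refine ⟨fun x => ?_, ?_, fun j _ => ?_⟩
  · simpa [rationalizationColumn, dotProduct_blockOn, dot_eq_dotProduct] using hcol (.inl x)
  · simpa [rationalizationTarget, dotProduct_blockOn] using htarget
  · have := hcol (.inr j)
    simp only [rationalizationColumn, dotProduct_blockOn, dot_eq_dotProduct, dotProduct_sub,
      sum_sub_distrib] at this ⊢
    linarith

theorem exists_isLuceRationalization_of_forall_not_isWeakMoneyPump [Nonempty X]
    (hp : ∀ N ∈ 𝒩, ∀ i ∈ N, p N i ∈ simplex X) (h : ∀ b, ¬ IsWeakMoneyPump 𝒩 p i b) :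
    ∃ v μ, IsLuceRationalization 𝒩 p i v μ := by
  rcases (𝒩.filter (fun N => i ∈ N)).eq_empty_or_nonempty with hF | hF
  · refine ⟨Pi.single (Classical.arbitrary X) 1, 0, single_mem_stdSimplex ℝ _, le_rfl,
      fun N hN hiN => ?_⟩
    have : N ∈ 𝒩.filter (fun N => i ∈ N) := mem_filter.2 ⟨hN, hiN⟩
    simp [hF] at this
  obtain ⟨μ, hμ, hc⟩ | ⟨y, hy, hcy⟩ :=
    mem_cone_or_exists_separating univ (rationalizationColumn 𝒩 p i) (rationalizationTarget 𝒩 p i)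
  · exact ⟨_, _, isLuceRationalization_of_eq_sum_smul hp hF hμ hc⟩
  · exact (h _ (isWeakMoneyPump_curry (fun k => hy k (mem_univ k)) hcy)).elim

theorem exists_isLuceRationalization_iff_not_exists_isMoneyPump [Nonempty X]
    (hp : ∀ N ∈ 𝒩, ∀ i ∈ N, p N i ∈ simplex X) :
    (∃ v μ, IsLuceRationalization 𝒩 p i v μ) ↔ ¬ ∃ b, IsMoneyPump 𝒩 p i b := by
  refine ⟨fun ⟨v, μ, h⟩ ⟨b, hb⟩ => h.not_isWeakMoneyPump b hb.isWeakMoneyPump, fun h => ?_⟩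
  exact exists_isLuceRationalization_of_forall_not_isWeakMoneyPump hp fun b hb =>
    h (hb.exists_isMoneyPump hp)

end LuceLinearInMeans

theorem llm_iff_no_weakly_incentive_compatible_money_pump_general
    {X A : Type*} [Fintype X] [Fintype A] [DecidableEq A]
    (hX : 2 ≤ Fintype.card X)
    (𝒩 : Finset (Finset A))
    (p : Finset A → A → X → ℝ) (hp : ∀ N ∈ 𝒩, ∀ i ∈ N, p N i ∈ simplex X) :
    LLMConsistent 𝒩 p ↔
      ∀ i : A, ¬ ∃ b : Finset A → X → ℝ,
        (∀ x : X, (∑ N ∈ 𝒩.filter (fun N => i ∈ N), b N x) < 0) ∧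
        (∀ N ∈ 𝒩.filter (fun N => i ∈ N), 0 < dot (b N) (p N i)) ∧
        (∀ j : A, j ≠ i →
          0 ≤ ∑ N ∈ 𝒩.filter (fun N => i ∈ N ∧ j ∈ N), dot (b N) (p N i - p N j)) := by
  have : Nonempty X := Fintype.card_pos_iff.mp (by omega)
  rw [llmConsistent_iff_forall_exists_isLuceRationalization]
  exact forall_congr' fun i => exists_isLuceRationalization_iff_not_exists_isMoneyPump hp

/-- Theorem 2: a dataset is consistent with the Luce linear-in-means model iff it admits
no weakly incentive compatible money pump. -/
theorem llm_iff_no_weakly_incentive_compatible_money_pump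
    {X A : Type*} [Fintype X] [Fintype A] [DecidableEq A]
    (hX : 2 ≤ Fintype.card X) (hA : 2 ≤ Fintype.card A)
    (𝒩 : Finset (Finset A)) (h𝒩 : 𝒩.Nonempty) (h𝒩' : ∀ N ∈ 𝒩, N.Nonempty)
    (p : Finset A → A → X → ℝ) (hp : ∀ N ∈ 𝒩, ∀ i ∈ N, p N i ∈ simplex X) :
    LLMConsistent 𝒩 p ↔
      ∀ i : A, ¬ ∃ b : Finset A → X → ℝ,
        (∀ x : X, (∑ N ∈ 𝒩.filter (fun N => i ∈ N), b N x) < 0) ∧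
        (∀ N ∈ 𝒩.filter (fun N => i ∈ N), 0 < dot (b N) (p N i)) ∧
        (∀ j : A, j ≠ i →
          0 ≤ ∑ N ∈ 𝒩.filter (fun N => i ∈ N ∧ j ∈ N), dot (b N) (p N i - p N j)) :=
  llm_iff_no_weakly_incentive_compatible_money_pump_general hX 𝒩 p hp
end
end

section
/- Theorem 3 (characterization of the uniform linear-in-means model with equal group sizes): Suppose all groups in 𝒩 have the same cardinality. Then a dataset {p^N}_{N∈𝒩} is consistent with the uniform linear-in-means model if and only if it satisfies cyclic constancy (for every cycle (i_k, j_k, N_k)_{k=1}^K, Σ_{k=1}^K (p_{i_k}^{N_k} − p_{j_k}^{N_k}) = 0), symmetric peer effects (for all N, M ∈ 𝒩 with i ∈ N ∩ M, p_i^N − Σ_{j∈N∖M}(p_j^N − p_i^N) = p_i^M − Σ_{k∈M∖N}(p_k^M − p_i^M)), and bounded total peer effects (for all N ∈ 𝒩 and i ∈ N, p_i^N ≥ Σ_{j∈N∖{i}}(p_j^N − p_i^N) coordinatewise). -/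
open Finset
open scoped Classical

noncomputable section

/-- Consistency with the uniform linear-in-means model (ULM). -/
def ULMConsistent {X A : Type*} [Fintype X] [DecidableEq A]
    (𝒩 : Finset (Finset A)) (p : Finset A → A → X → ℝ) : Prop :=
  ∃ v : A → X → ℝ, (∀ i, v i ∈ simplex X) ∧
    ∀ N ∈ 𝒩, ∀ i ∈ N,
      p N i = ((N.card : ℝ))⁻¹ • v i + ∑ j ∈ N.erase i, ((N.card : ℝ))⁻¹ • p N j

/-- Cyclic constancy: peer effects sum to zero around every cycle of influence. -/
def CyclicallyConstant {X A : Type*} [Fintype X]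
    (𝒩 : Finset (Finset A)) (p : Finset A → A → X → ℝ) : Prop :=
  ∀ (K : ℕ) (ii jj : Fin (K + 1) → A) (Ns : Fin (K + 1) → Finset A),
    (∀ k, Ns k ∈ 𝒩) → (∀ k, ii k ∈ Ns k) → (∀ k, jj k ∈ Ns k) →
    (∀ k, jj k = ii (k + 1)) →
    (∑ k, (p (Ns k) (ii k) - p (Ns k) (jj k))) = 0

/-- Symmetric peer effects. -/
def SymmetricPeerEffects {X A : Type*} [Fintype X] [DecidableEq A]
    (𝒩 : Finset (Finset A)) (p : Finset A → A → X → ℝ) : Prop :=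
  ∀ N ∈ 𝒩, ∀ M ∈ 𝒩, ∀ i : A, i ∈ N → i ∈ M →
    p N i - ∑ j ∈ N \ M, (p N j - p N i) = p M i - ∑ k ∈ M \ N, (p M k - p M i)

/-- Bounded total peer effects. -/
def BoundedTotalPeerEffects {X A : Type*} [Fintype X] [DecidableEq A]
    (𝒩 : Finset (Finset A)) (p : Finset A → A → X → ℝ) : Prop :=
  ∀ N ∈ 𝒩, ∀ i ∈ N, ∀ x : X, (∑ j ∈ N.erase i, (p N j x - p N i x)) ≤ p N i x

/-- Theorem 3: characterization of the uniform linear-in-means model when all groups have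
the same size. -/
theorem ulm_characterization_equal_sizes
    {X A : Type*} [Fintype X] [Fintype A] [DecidableEq A]
    (hX : 2 ≤ Fintype.card X) (hA : 2 ≤ Fintype.card A)
    (𝒩 : Finset (Finset A)) (h𝒩 : 𝒩.Nonempty) (h𝒩' : ∀ N ∈ 𝒩, N.Nonempty)
    (p : Finset A → A → X → ℝ) (hp : ∀ N ∈ 𝒩, ∀ i ∈ N, p N i ∈ simplex X)
    (hcard : ∀ N ∈ 𝒩, ∀ M ∈ 𝒩, N.card = M.card) :
    ULMConsistent 𝒩 p ↔
      CyclicallyConstant 𝒩 p ∧ SymmetricPeerEffects 𝒩 p ∧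
        BoundedTotalPeerEffects 𝒩 p := by
  constructor
  · rintro ⟨v, hv, heq⟩
    have hne : ∀ N : Finset A, ((N.card : ℝ) + 1) ≠ 0 := fun N => by positivity
    have key : ∀ N ∈ 𝒩, ∀ i ∈ N, ((N.card : ℝ) + 1) • p N i = v i + ∑ j ∈ N, p N j := by
      intro N hN i hi
      have hn : ((N.card : ℝ)) ≠ 0 := Nat.cast_ne_zero.mpr (h𝒩' N hN).card_pos.ne'
      have h2 : (N.card : ℝ) • p N i = v i + ∑ j ∈ N.erase i, p N j := by
        calc (N.card : ℝ) • p N i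
            = (N.card : ℝ) • (((N.card : ℝ))⁻¹ • v i
                + ∑ j ∈ N.erase i, ((N.card : ℝ))⁻¹ • p N j) := by
              rw [← heq N hN i hi]
          _ = v i + ∑ j ∈ N.erase i, p N j := by
              rw [smul_add, smul_inv_smul₀ hn, Finset.smul_sum]
              congr 1
              exact Finset.sum_congr rfl fun j _ => smul_inv_smul₀ hn _
      rw [add_smul, one_smul, h2, add_assoc, Finset.sum_erase_add _ _ hi]
    have sumS : ∀ N ∈ 𝒩, ∑ j ∈ N, p N j = ∑ j ∈ N, v j := by
      intro N hN
      have h3 : ((N.card : ℝ) + 1) • ∑ j ∈ N, p N j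
          = (∑ j ∈ N, v j) + (N.card : ℝ) • ∑ j ∈ N, p N j := by
        rw [Finset.smul_sum, Finset.sum_congr rfl (fun i hi => key N hN i hi),
          Finset.sum_add_distrib, Finset.sum_const, Nat.cast_smul_eq_nsmul]
      rw [add_smul, one_smul, add_comm (∑ j ∈ N, v j)] at h3
      exact add_left_cancel h3
    have keyv : ∀ N ∈ 𝒩, ∀ i ∈ N, ((N.card : ℝ) + 1) • p N i = v i + ∑ j ∈ N, v j := by
      intro N hN i hi
      rw [key N hN i hi, sumS N hN]
    have diff : ∀ N ∈ 𝒩, ∀ i ∈ N, ∀ j ∈ N,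
        p N i - p N j = ((N.card : ℝ) + 1)⁻¹ • (v i - v j) := by
      intro N hN i hi j hj
      have h : ((N.card : ℝ) + 1) • (p N i - p N j) = v i - v j := by
        rw [smul_sub, keyv N hN i hi, keyv N hN j hj]
        abel
      rw [← h, inv_smul_smul₀ (hne N)]
    refine ⟨?_, ?_, ?_⟩
    · intro K ii jj Ns hNs hii hjj hcy
      have hc : ∀ k, ((Ns k).card : ℝ) = ((Ns 0).card : ℝ) := fun k => by
        exact_mod_cast congrArg (Nat.cast : ℕ → ℝ) (hcard _ (hNs k) _ (hNs 0))
      calc ∑ k, (p (Ns k) (ii k) - p (Ns k) (jj k))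
          = ∑ k, (((Ns 0).card : ℝ) + 1)⁻¹ • (v (ii k) - v (jj k)) := by
            refine Finset.sum_congr rfl fun k _ => ?_
            rw [diff (Ns k) (hNs k) _ (hii k) _ (hjj k), hc k]
        _ = (((Ns 0).card : ℝ) + 1)⁻¹ • ∑ k, (v (ii k) - v (jj k)) :=
            (Finset.smul_sum).symm
        _ = 0 := by
            rw [Finset.sum_sub_distrib]
            have h : ∑ k, v (jj k) = ∑ k, v (ii k) := by
              rw [Finset.sum_congr rfl fun k _ => congrArg v (hcy k)]
              exact Equiv.sum_comp (Equiv.addRight (1 : Fin (K + 1))) (fun k => v (ii k))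
            rw [h, sub_self, smul_zero]
    · have aux : ∀ N ∈ 𝒩, ∀ i ∈ N, ∀ M : Finset A,
          p N i - ∑ j ∈ N \ M, (p N j - p N i)
            = ((N.card : ℝ) + 1)⁻¹ •
                (((1 : ℝ) + ((N \ M).card : ℝ)) • v i + ∑ j ∈ N ∩ M, v j) := by
        intro N hN i hi M
        have hpi : p N i = ((N.card : ℝ) + 1)⁻¹ • (v i + ∑ j ∈ N, v j) := by
          rw [← keyv N hN i hi, inv_smul_smul₀ (hne N)]
        have hterm : ∑ j ∈ N \ M, (p N j - p N i)
            = ((N.card : ℝ) + 1)⁻¹ • ∑ j ∈ N \ M, (v j - v i) := by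
          rw [Finset.smul_sum]
          refine Finset.sum_congr rfl fun j hj => ?_
          exact diff N hN j (Finset.mem_sdiff.mp hj).1 i hi
        rw [hterm, hpi, ← smul_sub]
        congr 1
        rw [Finset.sum_sub_distrib, Finset.sum_const, ← Finset.sum_inter_add_sum_sdiff N M v,
          ← Nat.cast_smul_eq_nsmul ℝ]
        module
      intro N hN M hM i hiN hiM
      rw [aux N hN i hiN M, aux M hM i hiM N, hcard N hN M hM,
        Finset.card_sdiff_comm (hcard N hN M hM), Finset.inter_comm]
    · intro N hN i hi x
      have h1 := congrFun (keyv N hN i hi) x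
      have h2 := congrFun (sumS N hN) x
      simp only [Pi.smul_apply, Pi.add_apply, Finset.sum_apply, smul_eq_mul] at h1 h2
      have hvnn : 0 ≤ v i x := (hv i).1 x
      have h1le : 1 ≤ N.card := Finset.card_pos.mpr ⟨i, hi⟩
      have hc : ((N.erase i).card : ℝ) = (N.card : ℝ) - 1 := by
        rw [Finset.card_erase_of_mem hi, Nat.cast_sub h1le, Nat.cast_one]
      have h3 : ∑ j ∈ N.erase i, (p N j x - p N i x)
          = (∑ j ∈ N, p N j x) - (N.card : ℝ) * p N i x := by
        rw [Finset.sum_sub_distrib, Finset.sum_const, nsmul_eq_mul, hc]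
        have h4 : ∑ j ∈ N.erase i, p N j x = (∑ j ∈ N, p N j x) - p N i x := by
          rw [eq_sub_iff_add_eq, Finset.sum_erase_add _ _ hi]
        rw [h4]; ring
      have h5 : ((N.card : ℝ) + 1) * p N i x = (N.card : ℝ) * p N i x + p N i x := by ring
      rw [h3]
      linarith
  · rintro ⟨hcyc, hsym, hbdd⟩
    have termeq : ∀ N ∈ 𝒩, ∀ M ∈ 𝒩, ∀ i, i ∈ N → i ∈ M → ∀ j, j ∈ N → j ∈ M →
        p N j - p N i = p M j - p M i := by
      intro N hN M hM i hiN hiM j hjN hjM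
      have h := hcyc 1 ![i, j] ![j, i] ![N, M] ?_ ?_ ?_ ?_
      · rw [Fin.sum_univ_two] at h
        simp only [Matrix.cons_val_zero, Matrix.cons_val_one, Matrix.head_cons] at h
        have h2 := neg_eq_of_add_eq_zero_right h
        rw [neg_sub] at h2
        exact h2
      · intro k; fin_cases k <;> simpa using ‹_›
      · intro k; fin_cases k <;> simp [hiN, hjM]
      · intro k; fin_cases k <;> simp [hjN, hiM]
      · intro k; fin_cases k <;> simp
    have split : ∀ (N M : Finset A) (i : A), i ∈ N → i ∈ M → ∀ f : A → X → ℝ,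
        ∑ j ∈ N.erase i, f j = ∑ j ∈ N \ M, f j + ∑ j ∈ (N ∩ M).erase i, f j := by
      intro N M i hiN hiM f
      have hdisj : Disjoint (N \ M) ((N ∩ M).erase i) :=
        Finset.disjoint_left.mpr fun a ha hb =>
          (Finset.mem_sdiff.mp ha).2 (Finset.mem_inter.mp (Finset.mem_of_mem_erase hb)).2
      rw [← Finset.sum_union hdisj]
      congr 1
      ext a
      simp only [Finset.mem_erase, Finset.mem_union, Finset.mem_sdiff, Finset.mem_inter]
      constructor
      · rintro ⟨hne, haN⟩
        by_cases haM : a ∈ M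
        · exact Or.inr ⟨hne, haN, haM⟩
        · exact Or.inl ⟨haN, haM⟩
      · rintro (⟨haN, haM⟩ | ⟨hne, haN, _⟩)
        · exact ⟨fun h => haM (h ▸ hiM), haN⟩
        · exact ⟨hne, haN⟩
    have welldef : ∀ N ∈ 𝒩, ∀ M ∈ 𝒩, ∀ i, i ∈ N → i ∈ M →
        p N i - ∑ j ∈ N.erase i, (p N j - p N i)
          = p M i - ∑ j ∈ M.erase i, (p M j - p M i) := by
      intro N hN M hM i hiN hiM
      rw [split N M i hiN hiM, split M N i hiM hiN, sub_add_eq_sub_sub, sub_add_eq_sub_sub,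
        hsym N hN M hM i hiN hiM]
      congr 1
      rw [Finset.inter_comm M N]
      refine Finset.sum_congr rfl fun j hj => ?_
      have hj' := Finset.mem_inter.mp (Finset.mem_of_mem_erase hj)
      exact termeq N hN M hM i hiN hiM j hj'.1 hj'.2
    have hXne : ((Fintype.card X : ℝ)) ≠ 0 := by positivity
    have huniform : (fun _ : X => (Fintype.card X : ℝ)⁻¹) ∈ simplex X := by
      constructor
      · intro x; positivity
      · rw [Finset.sum_const, nsmul_eq_mul, Finset.card_univ, mul_inv_cancel₀ hXne]
    set v : A → X → ℝ := fun i =>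
      if h : ∃ N, N ∈ 𝒩 ∧ i ∈ N
      then p h.choose i - ∑ j ∈ h.choose.erase i, (p h.choose j - p h.choose i)
      else fun _ => (Fintype.card X : ℝ)⁻¹ with hvdef
    have wspec : ∀ i N, N ∈ 𝒩 → i ∈ N →
        v i = p N i - ∑ j ∈ N.erase i, (p N j - p N i) := by
      intro i N hN hi
      have h : ∃ N, N ∈ 𝒩 ∧ i ∈ N := ⟨N, hN, hi⟩
      rw [hvdef]
      simp only
      rw [dif_pos h]
      exact welldef h.choose h.choose_spec.1 N hN i h.choose_spec.2 hi
    have qmem : ∀ N ∈ 𝒩, ∀ i ∈ N,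
        (p N i - ∑ j ∈ N.erase i, (p N j - p N i)) ∈ simplex X := by
      intro N hN i hi
      constructor
      · intro x
        have hb := hbdd N hN i hi x
        have hx : (p N i - ∑ j ∈ N.erase i, (p N j - p N i)) x
            = p N i x - ∑ j ∈ N.erase i, (p N j x - p N i x) := by
          simp [Finset.sum_apply]
        rw [hx]
        linarith
      · have hone : ∀ j ∈ N, ∑ x, p N j x = 1 := fun j hj => (hp N hN j hj).2
        have hx : ∑ x, (p N i - ∑ j ∈ N.erase i, (p N j - p N i)) x
            = (∑ x, p N i x) - ∑ j ∈ N.erase i, ((∑ x, p N j x) - ∑ x, p N i x) := by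
          simp only [Pi.sub_apply, Finset.sum_apply, Pi.sub_apply]
          rw [Finset.sum_sub_distrib]
          congr 1
          rw [Finset.sum_comm]
          exact Finset.sum_congr rfl fun j _ => by rw [Finset.sum_sub_distrib]
        rw [hx, hone i hi,
          Finset.sum_eq_zero (fun j hj => by
            rw [hone j (Finset.mem_of_mem_erase hj)]; ring)]
        simp
    refine ⟨v, ?_, ?_⟩
    · intro i
      by_cases h : ∃ N, N ∈ 𝒩 ∧ i ∈ N
      · obtain ⟨N, hN, hi⟩ := h
        rw [wspec i N hN hi]
        exact qmem N hN i hi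
      · rw [hvdef]
        simp only
        rw [dif_neg h]
        exact huniform
    · intro N hN i hi
      have hn : ((N.card : ℝ)) ≠ 0 := Nat.cast_ne_zero.mpr (h𝒩' N hN).card_pos.ne'
      have h1le : 1 ≤ N.card := Finset.card_pos.mpr ⟨i, hi⟩
      have hc : ((N.erase i).card : ℝ) = (N.card : ℝ) - 1 := by
        rw [Finset.card_erase_of_mem hi, Nat.cast_sub h1le, Nat.cast_one]
      rw [wspec i N hN hi, ← Finset.smul_sum, ← smul_add]
      have hkey : (p N i - ∑ j ∈ N.erase i, (p N j - p N i)) + ∑ j ∈ N.erase i, p N j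
          = (N.card : ℝ) • p N i := by
        rw [Finset.sum_sub_distrib, Finset.sum_const, ← Nat.cast_smul_eq_nsmul ℝ, hc]
        module
      rw [hkey, inv_smul_smul₀ hn]
end
end

section
/- Theorem A.2 (polyhedral separation on the probability hyperplane): Let n ≥ 1 and let X₁ = {x ∈ ℝⁿ : Σ_{i=1}^n x_i = 1}. Let A_1, …, A_k be nonempty subsets of X₁, each of which is a polyhedron, i.e. an intersection of finitely many closed half-spaces of ℝⁿ. Then ⋂_{i=1}^k A_i = ∅ if and only if there exist vectors p_1, …, p_k ∈ ℝⁿ with Σ_{i=1}^k p_i = 0 such that p_i · x > 0 for every i ∈ {1,…,k} and every x ∈ A_i. -/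
open Finset

noncomputable section

/-- A polyhedron in ℝⁿ: an intersection of finitely many closed half-spaces. -/
def IsPolyhedron {n : ℕ} (A : Set (Fin n → ℝ)) : Prop :=
  ∃ (m : ℕ) (a : Fin m → Fin n → ℝ) (c : Fin m → ℝ),
    A = {x | ∀ t, (∑ i, a t i * x i) ≤ c t}

/-!
If the `A i` have no common point, the system formed by all their defining inequalities is
infeasible, so by Farkas' lemma some nonnegative combination of these inequalities reads
`0 ≤ (negative constant)`. Grouping the combination by polyhedron gives inequalities
`Q i ⬝ᵥ x ≤ r i` valid on `A i` with `∑ i, Q i = 0` and `∑ i, r i < 0`. On the hyperplane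
`∑ t, x t = 1` a constant `c` agrees with the linear form `c • 1`, so
`P i = (r i - (∑ j, r j) / k) • 1 - Q i` works. Conversely, at a common point the positive numbers
`P i ⬝ᵥ x` would sum to `0`.

Farkas' lemma comes from separating a point from a closed convex cone; finitely generated cones
are closed by the conic Carathéodory theorem, as finite unions of simplicial cones.
-/

namespace PointedCone

section Caratheodory

variable {𝕜 E : Type*} [Field 𝕜] [LinearOrder 𝕜] [IsStrictOrderedRing 𝕜]
  [AddCommGroup E] [Module 𝕜 E]

theorem mem_hull_finset_iff {s : Finset E} {x : E} :
    x ∈ hull 𝕜 (s : Set E) ↔ ∃ f : E → 𝕜, (∀ a ∈ s, 0 ≤ f a) ∧ ∑ a ∈ s, f a • a = x := by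
  constructor
  · intro hx
    obtain ⟨f, -, rfl⟩ := Submodule.mem_span_finset.1 hx
    exact ⟨fun a => f a, fun a _ => (f a).2, rfl⟩
  · rintro ⟨f, hf, rfl⟩
    exact Submodule.sum_mem _ fun a ha => Submodule.smul_mem _ ⟨f a, hf a ha⟩ (subset_hull ha)

theorem exists_erase_of_not_linearIndepOn [DecidableEq E] {s : Finset E}
    (hs : ¬ LinearIndepOn 𝕜 id (s : Set E)) {f : E → 𝕜} (hf : ∀ a ∈ s, 0 ≤ f a) :
    ∃ a ∈ s, ∃ g : E → 𝕜, (∀ b ∈ s.erase a, 0 ≤ g b) ∧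
      ∑ b ∈ s.erase a, g b • b = ∑ b ∈ s, f b • b := by
  obtain ⟨h, hh, a₁, ha₁, hpos⟩ : ∃ h : E → 𝕜, ∑ b ∈ s, h b • b = 0 ∧ ∃ a ∈ s, 0 < h a := by
    obtain ⟨h, hh, a, ha, hne⟩ := not_linearIndepOn_finset_iff.1 hs
    rcases hne.lt_or_gt with hneg | hpos
    · exact ⟨-h, by simpa [neg_smul, sum_neg_distrib] using hh, a, ha, by simpa⟩
    · exact ⟨h, hh, a, ha, hpos⟩
  -- `r • h` is the largest multiple of `h` that can be subtracted from `f` keeping it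
  -- nonnegative on `s`; it kills the coefficient of `a`.
  obtain ⟨a, ha, hmin⟩ := exists_min_image (s.filter (0 < h ·)) (fun b => f b / h b)
    ⟨a₁, mem_filter.2 ⟨ha₁, hpos⟩⟩
  obtain ⟨has, hha⟩ := mem_filter.1 ha
  set r := f a / h a
  refine ⟨a, has, fun b => f b - r * h b, fun b hb => ?_, ?_⟩
  · have hbs := mem_of_mem_erase hb
    rcases le_or_gt (h b) 0 with hb0 | hb0
    · nlinarith [hf b hbs, div_nonneg (hf a has) hha.le]
    · have := hmin b (mem_filter.2 ⟨hbs, hb0⟩)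
      rw [le_div_iff₀ hb0] at this
      linarith
  · rw [sum_erase _ (by simp [r, div_mul_cancel₀ _ hha.ne'])]
    simp only [sub_smul, mul_smul, sum_sub_distrib, ← smul_sum, hh, smul_zero, sub_zero]

theorem exists_linearIndepOn_of_mem_hull {s : Set E} (hs : s.Finite) {x : E}
    (hx : x ∈ hull 𝕜 s) : ∃ t ⊆ s, LinearIndepOn 𝕜 id t ∧ x ∈ hull 𝕜 t := by
  classical
  lift s to Finset E using hs
  induction s using Finset.strongInduction generalizing x with
  | H s ih =>
    by_cases hli : LinearIndepOn 𝕜 id (s : Set E)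
    · exact ⟨s, subset_rfl, hli, hx⟩
    obtain ⟨f, hf, rfl⟩ := mem_hull_finset_iff.1 hx
    obtain ⟨a, ha, g, hg, hsum⟩ := exists_erase_of_not_linearIndepOn hli hf
    obtain ⟨t, hts, htli, hxt⟩ :=
      ih (s.erase a) (erase_ssubset ha) (mem_hull_finset_iff.2 ⟨g, hg, hsum⟩)
    exact ⟨t, hts.trans (by simp), htli, hxt⟩

end Caratheodory

section Topology

variable {E : Type*} [AddCommGroup E] [Module ℝ E] [TopologicalSpace E] [IsTopologicalAddGroup E]
  [ContinuousSMul ℝ E] [T2Space E]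

theorem IsSimplicial.isClosed {C : PointedCone ℝ E} (hC : C.IsSimplicial) :
    IsClosed (C : Set E) := by
  obtain ⟨s, hs, hli, rfl⟩ := hC
  have := hs.fintype
  set L := Fintype.linearCombination ℝ ((↑) : s → E)
  have hL : (hull ℝ s : Set E) = L '' Set.Ici 0 := by
    ext x
    simp only [SetLike.mem_coe, Submodule.mem_span_iff_of_fintype, Set.mem_image, Set.mem_Ici,
      L, Fintype.linearCombination_apply]
    constructor
    · rintro ⟨c, rfl⟩
      exact ⟨fun i => c i, fun i => (c i).2, rfl⟩
    · rintro ⟨c, hc, rfl⟩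
      exact ⟨fun i => ⟨c i, hc i⟩, rfl⟩
  rw [hL]
  exact (LinearMap.isClosedEmbedding_of_injective (LinearMap.ker_eq_bot.2
    hli.fintypeLinearCombination_injective)).isClosedMap _ isClosed_Ici

theorem isClosed_hull_of_finite {s : Set E} (hs : s.Finite) : IsClosed (hull ℝ s : Set E) := by
  have : (hull ℝ s : Set E) = ⋃ t ∈ {t | t ⊆ s ∧ LinearIndepOn ℝ id t}, hull ℝ t := by
    refine subset_antisymm (fun x hx => ?_)
      (Set.iUnion₂_subset fun t ht => Submodule.span_mono ht.1)
    obtain ⟨t, hts, hli, hxt⟩ := exists_linearIndepOn_of_mem_hull hs hx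
    exact Set.mem_biUnion ⟨hts, hli⟩ hxt
  rw [this]
  exact (hs.finite_subsets.subset fun t ht => ht.1).isClosed_biUnion
    fun t ht => (IsSimplicial.hull (hs.subset ht.1) ht.2).isClosed

end Topology

end PointedCone

theorem exists_dotProduct_nonneg_of_notMem_hull {ι d : Type*} [Finite ι] [Fintype d]
    {w : ι → d → ℝ} {b : d → ℝ} (hb : b ∉ PointedCone.hull ℝ (Set.range w)) :
    ∃ y : d → ℝ, (∀ j, 0 ≤ w j ⬝ᵥ y) ∧ b ⬝ᵥ y < 0 := by
  classical
  let C : ProperCone ℝ (d → ℝ) :=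
    ⟨PointedCone.hull ℝ (Set.range w), PointedCone.isClosed_hull_of_finite (Set.finite_range w)⟩
  obtain ⟨f, hfC, hfb⟩ := C.hyperplane_separation_point hb
  have hf (v : d → ℝ) : f v = v ⬝ᵥ fun i => f fun j => if i = j then 1 else 0 :=
    LinearMap.pi_apply_eq_sum_univ (f : (d → ℝ) →ₗ[ℝ] ℝ) v
  refine ⟨_, fun j => ?_, by rwa [← hf]⟩
  rw [← hf]
  exact hfC _ (PointedCone.subset_hull (Set.mem_range_self j))

theorem Option.elim'_dotProduct {α d : Type*} [Mul α] [AddCommMonoid α] [Fintype d] (r : α)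
    (v : d → α) (y : Option d → α) :
    Option.elim' r v ⬝ᵥ y = r * y none + v ⬝ᵥ (y ∘ some) := by
  simp [dotProduct, Fintype.sum_option]

theorem exists_nonneg_combination_of_infeasible {ι d : Type*} [Fintype ι] [Fintype d]
    (a : ι → d → ℝ) (c : ι → ℝ) (h : ∀ x, ∃ t, c t < a t ⬝ᵥ x) :
    ∃ l : ι → ℝ, (∀ t, 0 ≤ l t) ∧ ∑ t, l t • a t = 0 ∧ ∑ t, l t * c t < 0 := by
  -- Homogenize, with `none` as the extra coordinate: either `(-1, 0)` is a nonnegative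
  -- combination of `(1, 0)` and the `(c t, a t)`, or a separating `y` yields the solution
  -- `-(y ∘ some) / y none` of the system.
  set w : Option ι → Option d → ℝ :=
    Option.elim' (Option.elim' 1 0) fun t => Option.elim' (c t) (a t)
  by_cases hb : Option.elim' (-1) 0 ∈ PointedCone.hull ℝ (Set.range w)
  · obtain ⟨l, hl⟩ := (Submodule.mem_span_range_iff_exists_fun _).1 hb
    have hcoord (o : Option d) := congrFun hl o
    simp only [Finset.sum_apply, Fintype.sum_option] at hcoord
    refine ⟨fun t => (l (some t) : ℝ), fun t => (l (some t)).2, funext fun i => ?_, ?_⟩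
    · simpa [w] using hcoord (some i)
    · have := hcoord none
      simp only [w, Option.elim', Pi.smul_apply, ← Nonneg.coe_smul, smul_eq_mul, mul_one] at this
      linarith [(l none).2]
  · obtain ⟨y, hyw, hyb⟩ := exists_dotProduct_nonneg_of_notMem_hull hb
    have hy : 0 < y none := by simpa [Option.elim'_dotProduct] using hyb
    obtain ⟨t, ht⟩ := h fun i => -y (some i) / y none
    have hx : a t ⬝ᵥ (fun i => -y (some i) / y none) = -(a t ⬝ᵥ (y ∘ some)) / y none := by
      simp [dotProduct, Finset.sum_div, mul_div_assoc, neg_div]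
    rw [hx, lt_div_iff₀ hy] at ht
    have := hyw (some t)
    simp only [w, Option.elim', Option.elim'_dotProduct] at this
    linarith

theorem IsPolyhedron.exists_dotProduct_le_of_iInter_eq_empty {ι : Type*} [Fintype ι] {n : ℕ}
    {A : ι → Set (Fin n → ℝ)} (hA : ∀ i, IsPolyhedron (A i)) (h : ⋂ i, A i = ∅) :
    ∃ (Q : ι → Fin n → ℝ) (r : ι → ℝ), ∑ i, Q i = 0 ∧ ∑ i, r i < 0 ∧
      ∀ i, ∀ x ∈ A i, Q i ⬝ᵥ x ≤ r i := by
  choose m a c hAeq using hA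
  have hinfeas (x : Fin n → ℝ) : ∃ p : (i : ι) × Fin (m i), c p.1 p.2 < a p.1 p.2 ⬝ᵥ x := by
    obtain ⟨i, hi⟩ : ∃ i, x ∉ A i := by
      simpa using Set.eq_empty_iff_forall_notMem.1 h x
    rw [hAeq i] at hi
    obtain ⟨t, ht⟩ : ∃ t, c i t < a i t ⬝ᵥ x := by simpa [dotProduct] using hi
    exact ⟨⟨i, t⟩, ht⟩
  obtain ⟨l, hl, hla, hlc⟩ := exists_nonneg_combination_of_infeasible _ _ hinfeas
  refine ⟨fun i => ∑ t, l ⟨i, t⟩ • a i t, fun i => ∑ t, l ⟨i, t⟩ * c i t,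
    by simpa only [Fintype.sum_sigma] using hla, by simpa only [Fintype.sum_sigma] using hlc,
    fun i x hx => ?_⟩
  rw [hAeq i] at hx
  rw [sum_dotProduct]
  exact sum_le_sum fun t _ => by
    rw [smul_dotProduct, smul_eq_mul]
    exact mul_le_mul_of_nonneg_left (hx t) (hl _)

theorem exists_sum_eq_zero_of_iInter_eq_empty {ι : Type*} [Fintype ι] [Nonempty ι] {n : ℕ}
    {A : ι → Set (Fin n → ℝ)} (hsub : ∀ i, A i ⊆ {x | ∑ t, x t = 1})
    (hA : ∀ i, IsPolyhedron (A i)) (h : ⋂ i, A i = ∅) :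
    ∃ P : ι → Fin n → ℝ, ∑ i, P i = 0 ∧ ∀ i, ∀ x ∈ A i, 0 < P i ⬝ᵥ x := by
  obtain ⟨Q, r, hQ, hr, hQr⟩ := IsPolyhedron.exists_dotProduct_le_of_iInter_eq_empty hA h
  have hcard : (0 : ℝ) < Fintype.card ι := by exact_mod_cast Fintype.card_pos
  set δ := (∑ i, r i) / Fintype.card ι
  have hδ : δ < 0 := div_neg_of_neg_of_pos hr hcard
  refine ⟨fun i => (r i - δ) • 1 - Q i, ?_, fun i x hx => ?_⟩
  · rw [sum_sub_distrib, ← sum_smul, hQ, sum_sub_distrib, sum_const, card_univ, nsmul_eq_mul,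
      mul_div_cancel₀ _ hcard.ne', sub_self, zero_smul, sub_zero]
  · rw [sub_dotProduct, smul_dotProduct, one_dotProduct, hsub i hx, smul_eq_mul, mul_one]
    linarith [hQr i x hx]

theorem iInter_eq_empty_of_sum_eq_zero {ι d : Type*} [Fintype ι] [Nonempty ι] [Fintype d]
    {A : ι → Set (d → ℝ)} {P : ι → d → ℝ} (hP : ∑ i, P i = 0)
    (hpos : ∀ i, ∀ x ∈ A i, 0 < P i ⬝ᵥ x) : ⋂ i, A i = ∅ := by
  refine Set.eq_empty_of_forall_notMem fun x hx => ?_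
  have := sum_pos (fun i _ => hpos i x (Set.mem_iInter.1 hx i)) univ_nonempty
  rw [← sum_dotProduct, hP, zero_dotProduct] at this
  exact lt_irrefl 0 this

theorem polyhedral_separation_general (n k : ℕ) (hk : 1 ≤ k)
    (A : Fin k → Set (Fin n → ℝ))
    (hsub : ∀ i, A i ⊆ {x : Fin n → ℝ | (∑ t, x t) = 1})
    (hpoly : ∀ i, IsPolyhedron (A i)) :
    (⋂ i, A i) = ∅ ↔
      ∃ P : Fin k → Fin n → ℝ, (∑ i, P i) = 0 ∧
        ∀ i, ∀ x ∈ A i, 0 < ∑ t, P i t * x t := by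
  have : Nonempty (Fin k) := ⟨⟨0, hk⟩⟩
  exact ⟨exists_sum_eq_zero_of_iInter_eq_empty hsub hpoly,
    fun ⟨_, hP, hpos⟩ => iInter_eq_empty_of_sum_eq_zero hP hpos⟩

/-- Theorem A.2: polyhedral separation on the probability hyperplane
X₁ = {x ∈ ℝⁿ : Σ x_i = 1}. -/
theorem polyhedral_separation (n k : ℕ) (hn : 1 ≤ n) (hk : 1 ≤ k)
    (A : Fin k → Set (Fin n → ℝ))
    (hne : ∀ i, (A i).Nonempty)
    (hsub : ∀ i, A i ⊆ {x : Fin n → ℝ | (∑ t, x t) = 1})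
    (hpoly : ∀ i, IsPolyhedron (A i)) :
    (⋂ i, A i) = ∅ ↔
      ∃ P : Fin k → Fin n → ℝ, (∑ i, P i) = 0 ∧
        ∀ i, ∀ x ∈ A i, 0 < ∑ t, P i t * x t :=
  polyhedral_separation_general n k hk A hsub hpoly
end
end

section
/- Theorem C.1, (1)⇔(2): A dataset {p^N}_{N∈𝒩} is consistent with GLM* (the general linear-in-means model allowing π_i^N(i) ≥ 0) if and only if for every agent i ∈ 𝒜 the collection of sets {co⁻¹(Δ(p^N), p_i^N)}_{N∈𝒩_i^{ext}} has a point of mutual intersection, i.e. ⋂_{N∈𝒩_i^{ext}} co⁻¹(Δ(p^N), p_i^N) ≠ ∅ (with the empty intersection convention that this holds vacuously when 𝒩_i^{ext} = ∅, in which case any v ∈ Δ(X) works). -/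
open Finset
open scoped Classical

noncomputable section

/-- Consistency with GLM*: the general linear-in-means model allowing π_i^N(i) ≥ 0. -/
def GLMStarConsistent {X A : Type*} [Fintype X] [DecidableEq A]
    (𝒩 : Finset (Finset A)) (p : Finset A → A → X → ℝ) : Prop :=
  ∃ v : A → X → ℝ, (∀ i, v i ∈ simplex X) ∧
    ∀ N ∈ 𝒩, ∀ i ∈ N, ∃ π : A → ℝ,
      (∀ j ∈ N, 0 ≤ π j) ∧ (∑ j ∈ N, π j) = 1 ∧
      p N i = π i • v i + ∑ j ∈ N.erase i, π j • p N j

/-- 𝒩_i^{ext}: the groups containing i in which agent i's choice is not in the convex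
hull of the other agents' choices. -/
def Next {X A : Type*} [Fintype X] [DecidableEq A]
    (𝒩 : Finset (Finset A)) (p : Finset A → A → X → ℝ) (i : A) : Finset (Finset A) :=
  𝒩.filter (fun N => i ∈ N ∧ p N i ∉ convexHull ℝ (p N '' ↑(N.erase i)))

/-! Solving the GLM* equation `p_i = π_i v_i + Σ_{j ≠ i} π_j p_j` for `v_i` when `π_i > 0`
expresses `v_i` as an affine combination of the `p_j` with weights `1 / π_i` on `p_i` and
`-π_j / π_i ≤ 0` on the peers, i.e. as a point of the inverse cone; the same pivoting inverts
this, since inverse-cone weights satisfy `γ_i ≥ 1`. The weight `π_i` can vanish exactly when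
`p_i` lies in the convex hull of the peers' choices: on those groups `v_i` is unconstrained,
so only the groups in `𝒩_i^{ext}` restrict `v_i`, each to its inverse cone. -/

section PeerMixture

variable {A E : Type*} [AddCommGroup E] [Module ℝ E]

lemma mem_convexHull_image_finset_iff {s : Finset A} {f : A → E} {x : E} :
    x ∈ convexHull ℝ (f '' ↑s) ↔
      ∃ μ : A → ℝ, (∀ j ∈ s, 0 ≤ μ j) ∧ ∑ j ∈ s, μ j = 1 ∧ ∑ j ∈ s, μ j • f j = x := by
  constructor
  · refine fun hx ↦ convexHull_min (t := {x | ∃ μ : A → ℝ, (∀ j ∈ s, 0 ≤ μ j) ∧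
      ∑ j ∈ s, μ j = 1 ∧ ∑ j ∈ s, μ j • f j = x}) ?_ ?_ hx
    · rintro _ ⟨j, hj, rfl⟩
      refine ⟨Pi.single j 1, fun k _ ↦ ?_, ?_, ?_⟩
      · rw [Pi.single_apply]; split_ifs <;> norm_num
      · simp [Finset.mem_coe.1 hj]
      · simp [Pi.single_apply, ite_smul, Finset.mem_coe.1 hj]
    · rintro _ ⟨μ, hμ0, hμ1, rfl⟩ _ ⟨ν, hν0, hν1, rfl⟩ a b ha hb hab
      refine ⟨a • μ + b • ν, fun j hj ↦ ?_, ?_, ?_⟩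
      · simp only [Pi.add_apply, Pi.smul_apply, smul_eq_mul]
        exact add_nonneg (mul_nonneg ha (hμ0 j hj)) (mul_nonneg hb (hν0 j hj))
      · simp only [Pi.add_apply, Pi.smul_apply, smul_eq_mul, Finset.sum_add_distrib,
          ← Finset.mul_sum, hμ1, hν1, mul_one, hab]
      · simp only [Pi.add_apply, Pi.smul_apply, smul_eq_mul, add_smul, mul_smul,
          Finset.sum_add_distrib, ← Finset.smul_sum]
  · rintro ⟨μ, hμ0, hμ1, rfl⟩
    exact (convex_convexHull ℝ _).sum_mem hμ0 hμ1
      fun j hj ↦ subset_convexHull ℝ _ (Set.mem_image_of_mem f hj)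

variable [DecidableEq A]

/-- The weights obtained by solving `a = Σ_j c_j • x_j` for `x_i`. -/
def pivot (i : A) (c : A → ℝ) : A → ℝ := fun j ↦ if j = i then (c i)⁻¹ else -c j / c i

variable {N : Finset A} {i : A} {c : A → ℝ} {q : A → E} {v : E}

@[simp] lemma pivot_self : pivot i c i = (c i)⁻¹ := if_pos rfl

lemma pivot_of_ne {j : A} (hj : j ≠ i) : pivot i c j = -c j / c i := if_neg hj

lemma pivot_pivot (hc : c i ≠ 0) : pivot i (pivot i c) = c := by
  funext j
  by_cases hj : j = i
  · subst hj; simp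
  · rw [pivot_of_ne hj, pivot_of_ne hj, pivot_self]
    field_simp

lemma sum_pivot (hi : i ∈ N) (hc : c i ≠ 0) (h1 : ∑ j ∈ N, c j = 1) :
    ∑ j ∈ N, pivot i c j = 1 := by
  rw [← Finset.add_sum_erase _ _ hi, pivot_self,
    Finset.sum_congr rfl fun j hj ↦ pivot_of_ne (Finset.ne_of_mem_erase hj),
    ← Finset.sum_div, Finset.sum_neg_distrib, Finset.sum_erase_eq_sub hi, h1]
  field_simp
  ring

lemma pivot_nonpos_of_nonneg {j : A} (hj : j ≠ i) (hci : 0 ≤ c i) (hcj : 0 ≤ c j) :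
    pivot i c j ≤ 0 := by
  rw [pivot_of_ne hj]
  exact div_nonpos_of_nonpos_of_nonneg (neg_nonpos.2 hcj) hci

lemma pivot_nonneg_of_nonpos {j : A} (hj : j ≠ i) (hci : 0 ≤ c i) (hcj : c j ≤ 0) :
    0 ≤ pivot i c j := by
  rw [pivot_of_ne hj]
  exact div_nonneg (neg_nonneg.2 hcj) hci

lemma eq_sum_smul_iff_eq_pivot {a : E} (hi : i ∈ N) (hc : c i ≠ 0) :
    a = ∑ j ∈ N, c j • q j ↔
      q i = pivot i c i • a + ∑ j ∈ N.erase i, pivot i c j • q j := by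
  have hpeers : ∑ j ∈ N.erase i, pivot i c j • q j =
      -(c i)⁻¹ • ∑ j ∈ N.erase i, c j • q j := by
    rw [Finset.smul_sum]
    refine Finset.sum_congr rfl fun j hj ↦ ?_
    rw [pivot_of_ne (Finset.ne_of_mem_erase hj), smul_smul]
    ring_nf
  rw [← Finset.add_sum_erase _ _ hi, pivot_self, hpeers]
  generalize ∑ j ∈ N.erase i, c j • q j = S
  constructor
  · rintro rfl
    match_scalars <;> simp [hc]
  · intro h
    rw [h]
    match_scalars <;> simp [hc]

def IsPeerMixture (N : Finset A) (i : A) (q : A → E) (v : E) : Prop :=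
  ∃ π : A → ℝ, (∀ j ∈ N, 0 ≤ π j) ∧ ∑ j ∈ N, π j = 1 ∧
    q i = π i • v + ∑ j ∈ N.erase i, π j • q j

lemma isPeerMixture_of_mem_convexHull (hi : i ∈ N)
    (hq : q i ∈ convexHull ℝ (q '' ↑(N.erase i))) (v : E) : IsPeerMixture N i q v := by
  obtain ⟨μ, hμ0, hμ1, hμ⟩ := mem_convexHull_image_finset_iff.1 hq
  have hpeers : ∀ j ∈ N.erase i, Function.update μ i 0 j = μ j :=
    fun j hj ↦ Function.update_of_ne (Finset.ne_of_mem_erase hj) _ _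
  refine ⟨Function.update μ i 0, fun j hj ↦ ?_, ?_, ?_⟩
  · by_cases hji : j = i
    · simp [hji]
    · rw [Function.update_of_ne hji]
      exact hμ0 j (Finset.mem_erase.2 ⟨hji, hj⟩)
  · rw [Finset.sum_update_of_mem hi, Finset.sdiff_singleton_eq_erase, zero_add, hμ1]
  · rw [Function.update_self, zero_smul, zero_add, ← hμ]
    exact Finset.sum_congr rfl fun j hj ↦ by rw [hpeers j hj]

lemma IsPeerMixture.exists_eq_sum_smul (hi : i ∈ N)
    (hq : q i ∉ convexHull ℝ (q '' ↑(N.erase i))) (h : IsPeerMixture N i q v) :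
    ∃ γ : A → ℝ, (∀ j ∈ N.erase i, γ j ≤ 0) ∧ ∑ j ∈ N, γ j = 1 ∧ v = ∑ j ∈ N, γ j • q j := by
  obtain ⟨π, hπ0, hπ1, hπ⟩ := h
  have hπi : π i ≠ 0 := by
    intro h0
    refine hq (mem_convexHull_image_finset_iff.2
      ⟨π, fun j hj ↦ hπ0 j (Finset.mem_of_mem_erase hj), ?_, ?_⟩)
    · rwa [← Finset.add_sum_erase _ _ hi, h0, zero_add] at hπ1
    · rw [hπ, h0, zero_smul, zero_add]
  refine ⟨pivot i π, fun j hj ↦ ?_, sum_pivot hi hπi hπ1, ?_⟩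
  · exact pivot_nonpos_of_nonneg (Finset.ne_of_mem_erase hj) (hπ0 i hi)
      (hπ0 j (Finset.mem_of_mem_erase hj))
  · rwa [eq_sum_smul_iff_eq_pivot hi (by simpa using hπi), pivot_pivot hπi]

lemma isPeerMixture_of_eq_sum_smul {γ : A → ℝ} (hi : i ∈ N) (hγ0 : ∀ j ∈ N.erase i, γ j ≤ 0)
    (hγ1 : ∑ j ∈ N, γ j = 1) (hv : v = ∑ j ∈ N, γ j • q j) : IsPeerMixture N i q v := by
  have hγi : 0 < γ i := by
    have := Finset.sum_nonpos hγ0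
    rw [← Finset.add_sum_erase _ _ hi] at hγ1
    linarith
  refine ⟨pivot i γ, fun j hj ↦ ?_, sum_pivot hi hγi.ne' hγ1,
    (eq_sum_smul_iff_eq_pivot hi hγi.ne').1 hv⟩
  by_cases hji : j = i
  · rw [hji, pivot_self]; positivity
  · exact pivot_nonneg_of_nonpos hji hγi.le (hγ0 j (Finset.mem_erase.2 ⟨hji, hj⟩))

end PeerMixture

theorem glmstar_iff_intersection_general
    {X A : Type*} [Fintype X] [DecidableEq A]
    (hX : 2 ≤ Fintype.card X)
    (𝒩 : Finset (Finset A))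
    (p : Finset A → A → X → ℝ) :
    GLMStarConsistent 𝒩 p ↔
      ∀ i : A, (⋂ N ∈ Next 𝒩 p i, invCone p N i).Nonempty := by
  constructor
  · rintro ⟨v, hv, hfit⟩ i
    refine ⟨v i, Set.mem_iInter₂.2 fun N hN ↦ ?_⟩
    obtain ⟨hN, hi, hext⟩ := Finset.mem_filter.1 hN
    exact ⟨hv i, IsPeerMixture.exists_eq_sum_smul hi hext (hfit N hN i hi)⟩
  · intro h
    choose w hw using h
    obtain ⟨x₀⟩ : Nonempty X := Fintype.card_pos_iff.1 (by omega)
    obtain ⟨v, hv, hvw⟩ : ∃ v : A → X → ℝ, (∀ i, v i ∈ simplex X) ∧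
        ∀ i, w i ∈ simplex X → v i = w i :=
      ⟨fun i ↦ if w i ∈ simplex X then w i else Pi.single x₀ 1, fun i ↦ by
        dsimp only
        split_ifs with hsimplex
        -- `simplex X` unfolds to `stdSimplex ℝ X`
        exacts [hsimplex, single_mem_stdSimplex ℝ x₀], fun i hsimplex ↦ if_pos hsimplex⟩
    refine ⟨v, hv, fun N hN i hi ↦ ?_⟩
    by_cases hext : N ∈ Next 𝒩 p i
    · obtain ⟨hsimplex, γ, hγ0, hγ1, hγ⟩ := Set.mem_iInter₂.1 (hw i) N hext
      rw [hvw i hsimplex]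
      exact isPeerMixture_of_eq_sum_smul hi hγ0 hγ1 hγ
    · refine isPeerMixture_of_mem_convexHull hi ?_ _
      by_contra hhull
      exact hext (Finset.mem_filter.2 ⟨hN, hi, hhull⟩)

/-- Theorem C.1, (1) ⇔ (2): consistency with GLM* is equivalent to the inverse cones over
𝒩_i^{ext} having a point of mutual intersection, for every agent. -/
theorem glmstar_iff_intersection
    {X A : Type*} [Fintype X] [Fintype A] [DecidableEq A]
    (hX : 2 ≤ Fintype.card X) (hA : 2 ≤ Fintype.card A)
    (𝒩 : Finset (Finset A)) (h𝒩 : 𝒩.Nonempty) (h𝒩' : ∀ N ∈ 𝒩, N.Nonempty)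
    (p : Finset A → A → X → ℝ) (hp : ∀ N ∈ 𝒩, ∀ i ∈ N, p N i ∈ simplex X) :
    GLMStarConsistent 𝒩 p ↔
      ∀ i : A, (⋂ N ∈ Next 𝒩 p i, invCone p N i).Nonempty :=
  glmstar_iff_intersection_general hX 𝒩 p
end
end

section
/- Lemma C.1 (extended inverse cone lemma): Fix N ∈ 𝒩, i ∈ N, and v ∈ Δ(X), and suppose p_i^N is not in the convex hull of {p_j^N : j ∈ N∖{i}}. There exist reals γ_j ≥ 0 (j ∈ N) with Σ_{j∈N} γ_j = 1 such that p_i^N = γ_i·v + Σ_{j∈N∖{i}} γ_j·p_j^N, if and only if v ∈ co⁻¹(Δ(p^N), p_i^N). -/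
open Finset
open scoped Classical

noncomputable section

/-- Lemma C.1 (extended inverse cone lemma). -/
theorem extended_inverse_cone_lemma
    {X A : Type*} [Fintype X] [Fintype A] [DecidableEq A]
    (hX : 2 ≤ Fintype.card X) (hA : 2 ≤ Fintype.card A)
    (𝒩 : Finset (Finset A)) (h𝒩 : 𝒩.Nonempty) (h𝒩' : ∀ N ∈ 𝒩, N.Nonempty)
    (p : Finset A → A → X → ℝ) (hp : ∀ N ∈ 𝒩, ∀ i ∈ N, p N i ∈ simplex X)
    (N : Finset A) (hN : N ∈ 𝒩) (i : A) (hi : i ∈ N)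
    (hext : p N i ∉ convexHull ℝ (p N '' ↑(N.erase i)))
    (v : X → ℝ) (hv : v ∈ simplex X) :
    (∃ γ : A → ℝ, (∀ j ∈ N, 0 ≤ γ j) ∧ (∑ j ∈ N, γ j) = 1 ∧
        p N i = γ i • v + ∑ j ∈ N.erase i, γ j • p N j) ↔
      v ∈ invCone p N i := by
  constructor
  · rintro ⟨γ, hγ0, hγ1, heq⟩
    have hsplit : γ i + ∑ j ∈ N.erase i, γ j = 1 := by
      rw [Finset.add_sum_erase _ _ hi]; exact hγ1
    have hgi : 0 < γ i := by
      rcases (hγ0 i hi).lt_or_eq with h | h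
      · exact h
      · exfalso; apply hext
        have hsum : ∑ j ∈ N.erase i, γ j = 1 := by linarith
        have hpc : p N i = (N.erase i).centerMass γ (p N) := by
          rw [Finset.centerMass_eq_of_sum_1 _ _ hsum, heq, ← h]
          simp
        rw [hpc]
        exact Finset.centerMass_mem_convexHull _
          (fun j hj => hγ0 j (Finset.mem_of_mem_erase hj))
          (by rw [hsum]; norm_num)
          (fun j hj => Set.mem_image_of_mem _ hj)
    refine ⟨hv, fun j => (if j = i then 1 else -γ j) / γ i, ?_, ?_, ?_⟩
    · intro j hj
      dsimp only
      rw [if_neg (Finset.ne_of_mem_erase hj)]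
      have := hγ0 j (Finset.mem_of_mem_erase hj)
      apply div_nonpos_of_nonpos_of_nonneg (by linarith) hgi.le
    · rw [← Finset.add_sum_erase _ _ hi, if_pos rfl]
      have h2 : ∑ j ∈ N.erase i, (if j = i then (1:ℝ) else -γ j) / γ i
          = (∑ j ∈ N.erase i, -γ j) / γ i := by
        rw [Finset.sum_div]
        exact Finset.sum_congr rfl fun j hj => by
          rw [if_neg (Finset.ne_of_mem_erase hj)]
      rw [h2, Finset.sum_neg_distrib]
      field_simp
      linarith
    · apply smul_right_injective (X → ℝ) hgi.ne'
      dsimp only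
      have h3 : γ i • ∑ j ∈ N, ((if j = i then (1:ℝ) else -γ j) / γ i) • p N j
          = ∑ j ∈ N, (if j = i then (1:ℝ) else -γ j) • p N j := by
        rw [Finset.smul_sum]
        exact Finset.sum_congr rfl fun j hj => by
          rw [smul_smul, mul_div_cancel₀ _ hgi.ne']
      rw [h3, ← Finset.add_sum_erase _ _ hi, if_pos rfl, one_smul]
      have h4 : ∑ j ∈ N.erase i, (if j = i then (1:ℝ) else -γ j) • p N j
          = -∑ j ∈ N.erase i, γ j • p N j := by
        rw [← Finset.sum_neg_distrib]
        exact Finset.sum_congr rfl fun j hj => by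
          rw [if_neg (Finset.ne_of_mem_erase hj), neg_smul]
      rw [h4, heq]
      abel
  · rintro ⟨_, δ, hδneg, hδ1, hveq⟩
    have hsplit : δ i + ∑ j ∈ N.erase i, δ j = 1 := by
      rw [Finset.add_sum_erase _ _ hi]; exact hδ1
    have hsn : ∑ j ∈ N.erase i, δ j ≤ 0 := Finset.sum_nonpos hδneg
    have hdi : 0 < δ i := by linarith
    refine ⟨fun j => (if j = i then 1 else -δ j) / δ i, ?_, ?_, ?_⟩
    · intro j hj
      dsimp only
      by_cases h : j = i
      · rw [if_pos h]; positivity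
      · rw [if_neg h]
        have := hδneg j (Finset.mem_erase.mpr ⟨h, hj⟩)
        apply div_nonneg (by linarith) hdi.le
    · rw [← Finset.add_sum_erase _ _ hi, if_pos rfl]
      have h2 : ∑ j ∈ N.erase i, (if j = i then (1:ℝ) else -δ j) / δ i
          = (∑ j ∈ N.erase i, -δ j) / δ i := by
        rw [Finset.sum_div]
        exact Finset.sum_congr rfl fun j hj => by
          rw [if_neg (Finset.ne_of_mem_erase hj)]
      rw [h2, Finset.sum_neg_distrib]
      field_simp
      linarith
    · apply smul_right_injective (X → ℝ) hdi.ne'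
      dsimp only
      rw [smul_add, if_pos rfl, smul_smul, mul_div_cancel₀ _ hdi.ne', one_smul,
        Finset.smul_sum]
      have h4 : ∑ j ∈ N.erase i, δ i • (((if j = i then (1:ℝ) else -δ j) / δ i) • p N j)
          = -∑ j ∈ N.erase i, δ j • p N j := by
        rw [← Finset.sum_neg_distrib]
        exact Finset.sum_congr rfl fun j hj => by
          rw [if_neg (Finset.ne_of_mem_erase hj), smul_smul,
            mul_div_cancel₀ _ hdi.ne', neg_smul]
      rw [h4, hveq, ← Finset.add_sum_erase _ _ hi]
      abel
end
end
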